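/- arXiv:2011.00862 — 3 statements merged into one kernel-verified Lean document; each statement's English description precedes it below -/
import Mathlib

section
/- For any 2-edge-colouring of the complete graph K_{4n} (n ≥ 1) in which exactly half of the edges receive each colour, there exists a perfect matching of K_{4n} containing an equal number of edges of each colour. -/
open Finset

/-- All edges of the complete graph on `Fin N`. -/
def allEdges (N : ℕ) : Finset (Sym2 (Fin N)) :=
  Finset.univ.filter (fun e => ¬ e.IsDiag)

/-- `M` is a perfect matching of the complete graph on `Fin N`:
a set of non-loop edges such that every vertex lies in exactly one edge. -/
def IsPM {N : ℕ} (M : Finset (Sym2 (Fin N))) : Prop :=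
  (∀ e ∈ M, ¬ e.IsDiag) ∧ ∀ v : Fin N, ∃! e, e ∈ M ∧ v ∈ e

/-- Number of edges of `F` with colour `b` (`true` = red, `false` = black). -/
def cnt {N : ℕ} (c : Sym2 (Fin N) → Bool) (b : Bool) (F : Finset (Sym2 (Fin N))) : ℕ :=
  (F.filter (fun e => c e = b)).card

/-- Vertices incident to a black edge of `M`. -/
def VB {N : ℕ} (c : Sym2 (Fin N) → Bool) (M : Finset (Sym2 (Fin N))) : Finset (Fin N) :=
  Finset.univ.filter (fun v => ∃ e ∈ M, v ∈ e ∧ c e = false)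

/-- Vertices incident to a red edge of `M`. -/
def VR {N : ℕ} (c : Sym2 (Fin N) → Bool) (M : Finset (Sym2 (Fin N))) : Finset (Fin N) :=
  Finset.univ.filter (fun v => ∃ e ∈ M, v ∈ e ∧ c e = true)

/-- Edges with one endpoint in `S` and the other in `T`. -/
def between {N : ℕ} (S T : Finset (Fin N)) : Finset (Sym2 (Fin N)) :=
  (allEdges N).filter (fun e => ∃ a ∈ S, ∃ b ∈ T, e = s(a, b))

/-- Edges of the induced subgraph on `S`. -/
def inside {N : ℕ} (S : Finset (Fin N)) : Finset (Sym2 (Fin N)) :=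
  (allEdges N).filter (fun e => ∀ v ∈ e, v ∈ S)

/-- The swapping operation `S(M, u, v, x, y)`: replace `{uv, xy}` by `{ux, vy}`. -/
def swap {N : ℕ} (M : Finset (Sym2 (Fin N))) (u v x y : Fin N) : Finset (Sym2 (Fin N)) :=
  (M \ {s(u, v), s(x, y)}) ∪ {s(u, x), s(v, y)}

section Base
attribute [local instance] Classical.propDecidable

variable {N : ℕ}

lemma mem_allEdges {e : Sym2 (Fin N)} : e ∈ allEdges N ↔ ¬ e.IsDiag := by
  simp [allEdges]

lemma sym2_exists_rep (e : Sym2 (Fin N)) : ∃ a b, e = s(a, b) := by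
  induction e using Sym2.ind with
  | _ x y => exact ⟨x, y, rfl⟩

lemma sym2_mem_exists {v : Fin N} {e : Sym2 (Fin N)} (h : v ∈ e) : ∃ w, e = s(v, w) := by
  induction e using Sym2.ind with
  | _ x y =>
    rcases Sym2.mem_iff.1 h with rfl | rfl
    · exact ⟨y, rfl⟩
    · exact ⟨x, Sym2.eq_swap.symm⟩

/-- The edge of `M` containing `v` (junk value if none). -/
noncomputable def pEdge (M : Finset (Sym2 (Fin N))) (v : Fin N) : Sym2 (Fin N) :=
  if h : ∃ e, e ∈ M ∧ v ∈ e then h.choose else Sym2.diag v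

lemma pEdge_mem {M : Finset (Sym2 (Fin N))} (hM : IsPM M) (v : Fin N) :
    pEdge M v ∈ M ∧ v ∈ pEdge M v := by
  have h : ∃ e, e ∈ M ∧ v ∈ e := (hM.2 v).exists
  rw [pEdge, dif_pos h]
  exact h.choose_spec

lemma pEdge_eq {M : Finset (Sym2 (Fin N))} (hM : IsPM M) {v : Fin N} {e : Sym2 (Fin N)}
    (he : e ∈ M) (hv : v ∈ e) : pEdge M v = e := by
  have h := pEdge_mem hM v
  exact ((hM.2 v).unique ⟨h.1, h.2⟩ ⟨he, hv⟩)

/-- The partner of `v` in the matching `M`. -/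
noncomputable def ptr (M : Finset (Sym2 (Fin N))) (v : Fin N) : Fin N :=
  if h : ∃ w, pEdge M v = s(v, w) then h.choose else v

lemma ptr_spec {M : Finset (Sym2 (Fin N))} (hM : IsPM M) (v : Fin N) :
    pEdge M v = s(v, ptr M v) := by
  have h : ∃ w, pEdge M v = s(v, w) := sym2_mem_exists (pEdge_mem hM v).2
  rw [ptr, dif_pos h]
  exact h.choose_spec

lemma ptr_edge_mem {M : Finset (Sym2 (Fin N))} (hM : IsPM M) (v : Fin N) :
    s(v, ptr M v) ∈ M := by
  rw [← ptr_spec hM v]; exact (pEdge_mem hM v).1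

lemma ptr_ne {M : Finset (Sym2 (Fin N))} (hM : IsPM M) (v : Fin N) : ptr M v ≠ v := by
  intro h
  have h1 := ptr_edge_mem hM v
  have h2 := hM.1 _ h1
  rw [h] at h2
  exact h2 (Sym2.mk_isDiag_iff.2 rfl)

lemma ptr_eq_of {M : Finset (Sym2 (Fin N))} (hM : IsPM M) {v w : Fin N}
    (h : s(v, w) ∈ M) (hvw : v ≠ w) : ptr M v = w := by
  have := pEdge_eq hM h (Sym2.mem_mk_left v w)
  rw [ptr_spec hM v] at this
  rcases Sym2.eq_iff.1 this with ⟨h1, h2⟩ | ⟨h1, h2⟩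
  · exact h2
  · exact absurd h1 hvw

lemma ptr_invol {M : Finset (Sym2 (Fin N))} (hM : IsPM M) (v : Fin N) :
    ptr M (ptr M v) = v := by
  have h : s(ptr M v, v) ∈ M := by
    rw [Sym2.eq_swap]; exact ptr_edge_mem hM v
  exact ptr_eq_of hM h (ptr_ne hM v)

lemma pEdge_ptr {M : Finset (Sym2 (Fin N))} (hM : IsPM M) (v : Fin N) :
    pEdge M (ptr M v) = pEdge M v := by
  rw [ptr_spec hM v]
  exact pEdge_eq hM (ptr_edge_mem hM v) (Sym2.mem_mk_right v (ptr M v))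

lemma edge_eq_ptr {M : Finset (Sym2 (Fin N))} (hM : IsPM M) {v : Fin N} {e : Sym2 (Fin N)}
    (he : e ∈ M) (hv : v ∈ e) : e = s(v, ptr M v) := by
  rw [← pEdge_eq hM he hv]; exact ptr_spec hM v

lemma notMem_other {M : Finset (Sym2 (Fin N))} (hM : IsPM M) {e f : Sym2 (Fin N)} {v : Fin N}
    (he : e ∈ M) (hf : f ∈ M) (hef : e ≠ f) (hv : v ∈ e) : v ∉ f := by
  intro hvf
  exact hef ((pEdge_eq hM he hv).symm.trans (pEdge_eq hM hf hvf))

lemma two_mul_card_of_isPM {M : Finset (Sym2 (Fin N))} (hM : IsPM M) :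
    2 * M.card = N := by
  have key : (univ : Finset (Fin N)).card = ∑ e ∈ M, (univ.filter (fun v => pEdge M v = e)).card :=
    Finset.card_eq_sum_card_fiberwise (fun v _ => (pEdge_mem hM v).1)
  have fib : ∀ e ∈ M, (univ.filter (fun v => pEdge M v = e)).card = 2 := by
    intro e he
    obtain ⟨a, b, rfl⟩ := sym2_exists_rep e
    have hab : a ≠ b := fun h => (hM.1 _ he) (by rw [h]; exact Sym2.mk_isDiag_iff.2 rfl)
    have : (univ.filter (fun v => pEdge M v = s(a, b))) = {a, b} := by
      ext v
      simp only [mem_filter, mem_univ, true_and, mem_insert, mem_singleton]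
      constructor
      · intro h
        have : v ∈ s(a, b) := by rw [← h]; exact (pEdge_mem hM v).2
        simpa [Sym2.mem_iff] using this
      · intro h
        apply pEdge_eq hM he
        simp [Sym2.mem_iff, h]
    rw [this, Finset.card_pair hab]
  rw [Finset.sum_congr rfl fib, Finset.sum_const, smul_eq_mul] at key
  simp only [Finset.card_univ, Fintype.card_fin] at key
  omega

lemma cnt_add_cnt {c : Sym2 (Fin N) → Bool} (F : Finset (Sym2 (Fin N))) :
    cnt c true F + cnt c false F = F.card := by
  unfold cnt
  have := Finset.card_filter_add_card_filter_not (s := F) (p := fun e => c e = true)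
  have h2 : F.filter (fun e => ¬ (c e = true)) = F.filter (fun e => c e = false) := by
    apply Finset.filter_congr
    intro e _
    simp
  rw [h2] at this
  convert this using 2
end Base

section SwapPart
attribute [local instance] Classical.propDecidable
variable {N : ℕ} {c : Sym2 (Fin N) → Bool}

/-- Signed colour count. -/
noncomputable def Dint (c : Sym2 (Fin N) → Bool) (M : Finset (Sym2 (Fin N))) : ℤ :=
  (cnt c true M : ℤ) - (cnt c false M : ℤ)

noncomputable def chi (c : Sym2 (Fin N) → Bool) (d : Sym2 (Fin N)) : ℤ :=
  if c d = true then 1 else 0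

lemma chi_nonneg (d : Sym2 (Fin N)) : 0 ≤ chi c d := by unfold chi; split <;> simp

lemma chi_le_one (d : Sym2 (Fin N)) : chi c d ≤ 1 := by unfold chi; split <;> simp

/-- Distinctness of the four endpoints of two distinct matching edges. -/
lemma four_distinct {M : Finset (Sym2 (Fin N))} (hM : IsPM M) {a b x y : Fin N}
    (hE : s(a, b) ∈ M) (hF : s(x, y) ∈ M) (hne : s(a, b) ≠ s(x, y)) :
    a ≠ b ∧ x ≠ y ∧ a ≠ x ∧ a ≠ y ∧ b ≠ x ∧ b ≠ y := by
  have hab : a ≠ b := fun h => (hM.1 _ hE) (by rw [h]; exact Sym2.mk_isDiag_iff.2 rfl)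
  have hxy : x ≠ y := fun h => (hM.1 _ hF) (by rw [h]; exact Sym2.mk_isDiag_iff.2 rfl)
  have ha := notMem_other hM hE hF hne (Sym2.mem_mk_left a b)
  have hb := notMem_other hM hE hF hne (Sym2.mem_mk_right a b)
  rw [Sym2.mem_iff] at ha hb
  push_neg at ha hb
  exact ⟨hab, hxy, ha.1, ha.2, hb.1, hb.2⟩

lemma new_notMem {M : Finset (Sym2 (Fin N))} (hM : IsPM M) {a b x : Fin N}
    (hE : s(a, b) ∈ M) (hbx : b ≠ x) : s(a, x) ∉ M := by
  intro h
  have := pEdge_eq hM h (Sym2.mem_mk_left a x)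
  rw [pEdge_eq hM hE (Sym2.mem_mk_left a b)] at this
  rcases Sym2.eq_iff.1 this with ⟨h1, h2⟩ | ⟨h1, h2⟩
  · exact hbx h2
  · exact hbx (h2.trans h1)

/-- The swap of two matching edges is again a perfect matching. -/
lemma swap_isPM {M : Finset (Sym2 (Fin N))} (hM : IsPM M) {a b x y : Fin N}
    (hE : s(a, b) ∈ M) (hF : s(x, y) ∈ M) (hne : s(a, b) ≠ s(x, y)) :
    IsPM ((M \ {s(a, b), s(x, y)}) ∪ {s(a, x), s(b, y)}) := by
  obtain ⟨hab, hxy, hax, hay, hbx, hby⟩ := four_distinct hM hE hF hne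
  constructor
  · intro e he
    rcases Finset.mem_union.1 he with h | h
    · exact hM.1 _ (Finset.mem_sdiff.1 h).1
    · rcases Finset.mem_insert.1 h with rfl | h
      · rw [Sym2.mk_isDiag_iff]; exact hax
      · rw [Finset.mem_singleton.1 h, Sym2.mk_isDiag_iff]; exact hby
  · intro v
    by_cases hva : v = a ∨ v = x
    · -- the unique edge is s(a, x)
      refine ⟨s(a, x), ⟨Finset.mem_union_right _ (Finset.mem_insert_self _ _), ?_⟩, ?_⟩
      · rcases hva with rfl | rfl <;> simp [Sym2.mem_iff]
      · rintro e' ⟨he', hve'⟩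
        rcases Finset.mem_union.1 he' with h | h
        · exfalso
          have h1 := (Finset.mem_sdiff.1 h).1
          have h2 := (Finset.mem_sdiff.1 h).2
          simp only [Finset.mem_insert, Finset.mem_singleton] at h2
          push_neg at h2
          rcases hva with rfl | rfl
          · exact h2.1 (pEdge_eq hM h1 hve' ▸ (pEdge_eq hM hE (Sym2.mem_mk_left v b)).symm ▸ rfl)
          · exact h2.2 (pEdge_eq hM h1 hve' ▸ (pEdge_eq hM hF (Sym2.mem_mk_left v y)).symm ▸ rfl)
        · rcases Finset.mem_insert.1 h with rfl | h
          · rfl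
          · exfalso
            rw [Finset.mem_singleton.1 h] at hve'
            rw [Sym2.mem_iff] at hve'
            rcases hva with rfl | rfl
            · rcases hve' with rfl | rfl
              · exact hab rfl
              · exact hay rfl
            · rcases hve' with rfl | rfl
              · exact hbx rfl
              · exact hxy rfl
    · by_cases hvb : v = b ∨ v = y
      · refine ⟨s(b, y), ⟨Finset.mem_union_right _ (Finset.mem_insert_of_mem (Finset.mem_singleton_self _)), ?_⟩, ?_⟩
        · rcases hvb with rfl | rfl <;> simp [Sym2.mem_iff]
        · rintro e' ⟨he', hve'⟩
          rcases Finset.mem_union.1 he' with h | h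
          · exfalso
            have h1 := (Finset.mem_sdiff.1 h).1
            have h2 := (Finset.mem_sdiff.1 h).2
            simp only [Finset.mem_insert, Finset.mem_singleton] at h2
            push_neg at h2
            rcases hvb with rfl | rfl
            · exact h2.1 (pEdge_eq hM h1 hve' ▸ (pEdge_eq hM hE (Sym2.mem_mk_right a v)).symm ▸ rfl)
            · exact h2.2 (pEdge_eq hM h1 hve' ▸ (pEdge_eq hM hF (Sym2.mem_mk_right x v)).symm ▸ rfl)
          · rcases Finset.mem_insert.1 h with rfl | h
            · exfalso
              rw [Sym2.mem_iff] at hve'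
              rcases hvb with rfl | rfl
              · rcases hve' with rfl | rfl
                · exact hab rfl
                · exact hbx rfl
              · rcases hve' with rfl | rfl
                · exact hay rfl
                · exact hxy rfl
            · rw [Finset.mem_singleton.1 h]
      · -- v is untouched
        push_neg at hva hvb
        refine ⟨pEdge M v, ⟨?_, (pEdge_mem hM v).2⟩, ?_⟩
        · apply Finset.mem_union_left
          rw [Finset.mem_sdiff]
          refine ⟨(pEdge_mem hM v).1, ?_⟩
          simp only [Finset.mem_insert, Finset.mem_singleton]
          push_neg
          constructor
          · intro h
            have := (pEdge_mem hM v).2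
            rw [h, Sym2.mem_iff] at this
            rcases this with rfl | rfl
            · exact hva.1 rfl
            · exact hvb.1 rfl
          · intro h
            have := (pEdge_mem hM v).2
            rw [h, Sym2.mem_iff] at this
            rcases this with rfl | rfl
            · exact hva.2 rfl
            · exact hvb.2 rfl
        · rintro e' ⟨he', hve'⟩
          rcases Finset.mem_union.1 he' with h | h
          · exact pEdge_eq hM (Finset.mem_sdiff.1 h).1 hve' |>.symm
          · exfalso
            rcases Finset.mem_insert.1 h with rfl | h
            · rw [Sym2.mem_iff] at hve'
              rcases hve' with rfl | rfl
              · exact hva.1 rfl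
              · exact hva.2 rfl
            · rw [Finset.mem_singleton.1 h, Sym2.mem_iff] at hve'
              rcases hve' with rfl | rfl
              · exact hvb.1 rfl
              · exact hvb.2 rfl

lemma filter_pair_card {p : Sym2 (Fin N) → Prop} [DecidablePred p] {e f : Sym2 (Fin N)} (hef : e ≠ f) :
    (({e, f} : Finset (Sym2 (Fin N))).filter p).card
      = (if p e then 1 else 0) + (if p f then 1 else 0) := by
  rw [Finset.filter_insert, Finset.filter_singleton]
  by_cases h1 : p e <;> by_cases h2 : p f <;>
    simp [h1, h2, Finset.card_insert_of_notMem, hef]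

lemma cnt_swap {M : Finset (Sym2 (Fin N))} {E F E' F' : Sym2 (Fin N)} (t : Bool)
    (hE : E ∈ M) (hF : F ∈ M) (hne : E ≠ F) (hne' : E' ≠ F')
    (hE' : E' ∉ M) (hF' : F' ∉ M) :
    cnt c t ((M \ {E, F}) ∪ {E', F'}) + (({E, F} : Finset _).filter (fun d => c d = t)).card
      = cnt c t M + (({E', F'} : Finset _).filter (fun d => c d = t)).card := by
  unfold cnt
  rw [Finset.filter_union]
  have hdisj : Disjoint ((M \ {E, F}).filter (fun d => c d = t)) (({E', F'} : Finset _).filter (fun d => c d = t)) := by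
    apply Finset.disjoint_filter_filter
    apply Finset.disjoint_left.2
    intro d hd hd'
    have := (Finset.mem_sdiff.1 hd).1
    rcases Finset.mem_insert.1 hd' with rfl | h
    · exact hE' this
    · rw [Finset.mem_singleton.1 h] at this; exact hF' this
  rw [Finset.card_union_of_disjoint hdisj]
  have hsd : (M \ {E, F}).filter (fun d => c d = t)
      = (M.filter (fun d => c d = t)) \ (({E, F} : Finset _).filter (fun d => c d = t)) := by
    ext d
    simp only [Finset.mem_filter, Finset.mem_sdiff]
    tauto
  rw [hsd]
  have hsub : (({E, F} : Finset _).filter (fun d => c d = t)) ⊆ (M.filter (fun d => c d = t)) := by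
    intro d hd
    rw [Finset.mem_filter] at hd ⊢
    refine ⟨?_, hd.2⟩
    rcases Finset.mem_insert.1 hd.1 with rfl | h
    · exact hE
    · rw [Finset.mem_singleton.1 h]; exact hF
  rw [Finset.card_sdiff_of_subset hsub]
  have := Finset.card_le_card hsub
  omega

/-- Change of the signed count across a swap. -/
lemma Dint_swap {M : Finset (Sym2 (Fin N))} (hM : IsPM M) {a b x y : Fin N}
    (hE : s(a, b) ∈ M) (hF : s(x, y) ∈ M) (hne : s(a, b) ≠ s(x, y)) :
    Dint c ((M \ {s(a, b), s(x, y)}) ∪ {s(a, x), s(b, y)})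
      = Dint c M + 2 * (chi c s(a, x) + chi c s(b, y)) - 2 * (chi c s(a, b) + chi c s(x, y)) := by
  obtain ⟨hab, hxy, hax, hay, hbx, hby⟩ := four_distinct hM hE hF hne
  have hE'F' : s(a, x) ≠ s(b, y) := by
    intro h
    rcases Sym2.eq_iff.1 h with ⟨h1, h2⟩ | ⟨h1, h2⟩
    · exact hab h1
    · exact hay h1
  have hEM' : s(a, x) ∉ M := new_notMem hM hE hbx
  have hFM' : s(b, y) ∉ M := by
    intro h
    have h2 : s(b, a) ∈ M := by rw [Sym2.eq_swap]; exact hE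
    exact new_notMem hM h2 hay h
  have ht := cnt_swap (c := c) true hE hF hne hE'F' hEM' hFM'
  have hf := cnt_swap (c := c) false hE hF hne hE'F' hEM' hFM'
  rw [filter_pair_card hne, filter_pair_card hE'F'] at ht hf
  unfold Dint chi
  rcases Bool.eq_false_or_eq_true (c s(a, b)) with g1 | g1 <;>
    rcases Bool.eq_false_or_eq_true (c s(x, y)) with g2 | g2 <;>
    rcases Bool.eq_false_or_eq_true (c s(a, x)) with g3 | g3 <;>
    rcases Bool.eq_false_or_eq_true (c s(b, y)) with g4 | g4 <;>
  · simp only [g1, g2, g3, g4, if_true, if_false] at ht hf ⊢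
    simp at ht hf ⊢
    push_cast
    omega
end SwapPart
section ColourLemmas
attribute [local instance] Classical.propDecidable
variable {N : ℕ} {c : Sym2 (Fin N) → Bool}

/-- If no perfect matching is balanced, swaps never land on balance. -/
lemma swap_ne_zero (Hz : ∀ M : Finset (Sym2 (Fin N)), IsPM M → Dint c M ≠ 0)
    {M : Finset (Sym2 (Fin N))} (hM : IsPM M) {a b x y : Fin N}
    (hE : s(a, b) ∈ M) (hF : s(x, y) ∈ M) (hne : s(a, b) ≠ s(x, y)) :
    Dint c M + 2 * (chi c s(a, x) + chi c s(b, y)) - 2 * (chi c s(a, b) + chi c s(x, y)) ≠ 0 := by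
  rw [← Dint_swap hM hE hF hne]
  exact Hz _ (swap_isPM hM hE hF hne)

lemma chi_true {d : Sym2 (Fin N)} (h : c d = true) : chi c d = 1 := by simp [chi, h]
lemma chi_false {d : Sym2 (Fin N)} (h : c d = false) : chi c d = 0 := by simp [chi, h]

lemma chi_sum_ne_one {d d' : Sym2 (Fin N)} (h : chi c d + chi c d' ≠ 1) :
    c d = c d' := by
  rcases Bool.eq_false_or_eq_true (c d) with g1 | g1 <;>
    rcases Bool.eq_false_or_eq_true (c d') with g2 | g2 <;>
    simp [chi, g1, g2] at h ⊢

/-- Monochromatic pairings between red edges of a `D = 2` matching. -/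
lemma mono_red (Hz : ∀ M : Finset (Sym2 (Fin N)), IsPM M → Dint c M ≠ 0)
    {M : Finset (Sym2 (Fin N))} (hM : IsPM M) (hD : Dint c M = 2) {a b x y : Fin N}
    (hE : s(a, b) ∈ M) (hF : s(x, y) ∈ M) (hne : s(a, b) ≠ s(x, y))
    (hcE : c s(a, b) = true) (hcF : c s(x, y) = true) :
    c s(a, x) = c s(b, y) := by
  have h := swap_ne_zero Hz hM hE hF hne
  rw [hD, chi_true hcE, chi_true hcF] at h
  exact chi_sum_ne_one (by intro hh; rw [hh] at h; omega)

/-- Monochromatic pairings between black edges of a `D = -2` matching. -/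
lemma mono_black (Hz : ∀ M : Finset (Sym2 (Fin N)), IsPM M → Dint c M ≠ 0)
    {M : Finset (Sym2 (Fin N))} (hM : IsPM M) (hD : Dint c M = -2) {a b x y : Fin N}
    (hE : s(a, b) ∈ M) (hF : s(x, y) ∈ M) (hne : s(a, b) ≠ s(x, y))
    (hcE : c s(a, b) = false) (hcF : c s(x, y) = false) :
    c s(a, x) = c s(b, y) := by
  have h := swap_ne_zero Hz hM hE hF hne
  rw [hD, chi_false hcE, chi_false hcF] at h
  exact chi_sum_ne_one (by intro hh; rw [hh] at h; omega)

/-- Mixed pairings between a shared red and a shared black edge of adjacent `D = ±2` matchings. -/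
lemma mixed_pairing (Hz : ∀ M : Finset (Sym2 (Fin N)), IsPM M → Dint c M ≠ 0)
    {M M' : Finset (Sym2 (Fin N))} (hM : IsPM M) (hM' : IsPM M')
    (hD : Dint c M = 2) (hD' : Dint c M' = -2) {a b x y : Fin N}
    (hE : s(a, b) ∈ M) (hF : s(x, y) ∈ M) (hE' : s(a, b) ∈ M') (hF' : s(x, y) ∈ M')
    (hne : s(a, b) ≠ s(x, y)) (hcE : c s(a, b) = true) (hcF : c s(x, y) = false) :
    c s(a, x) = ! c s(b, y) := by
  have h1 := swap_ne_zero Hz hM hE hF hne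
  have h2 := swap_ne_zero Hz hM' hE' hF' hne
  rw [hD, chi_true hcE, chi_false hcF] at h1
  rw [hD', chi_true hcE, chi_false hcF] at h2
  have hs : chi c s(a, x) + chi c s(b, y) = 1 := by
    have b1 := chi_nonneg (c := c) s(a, x)
    have b2 := chi_nonneg (c := c) s(b, y)
    have b3 := chi_le_one (c := c) s(a, x)
    have b4 := chi_le_one (c := c) s(b, y)
    omega
  rcases Bool.eq_false_or_eq_true (c s(a, x)) with g1 | g1 <;>
    rcases Bool.eq_false_or_eq_true (c s(b, y)) with g2 | g2 <;>
    simp [chi, g1, g2] at hs ⊢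

lemma Dint_even {M : Finset (Sym2 (Fin N))} (hM : IsPM M) :
    Dint c M + 2 * (cnt c false M : ℤ) = M.card := by
  have := cnt_add_cnt (c := c) M
  unfold Dint
  push_cast
  omega
end ColourLemmas
section CntUnion
attribute [local instance] Classical.propDecidable
lemma cnt_union_of_disjoint {N : ℕ} {c : Sym2 (Fin N) → Bool} {b : Bool}
    {s t : Finset (Sym2 (Fin N))} (h : Disjoint s t) :
    cnt c b (s ∪ t) = cnt c b s + cnt c b t := by
  unfold cnt
  rw [Finset.filter_union]
  exact Finset.card_union_of_disjoint (Finset.disjoint_filter_filter h)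
end CntUnion
section Averaging
attribute [local instance] Classical.propDecidable
variable {N : ℕ} {c : Sym2 (Fin N) → Bool}

noncomputable def PMset (N : ℕ) : Finset (Finset (Sym2 (Fin N))) :=
  Finset.univ.filter IsPM

lemma mem_PMset {M : Finset (Sym2 (Fin N))} : M ∈ PMset N ↔ IsPM M := by
  simp [PMset]

lemma pm_subset_allEdges {M : Finset (Sym2 (Fin N))} (hM : IsPM M) : M ⊆ allEdges N :=
  fun e he => mem_allEdges.2 (hM.1 e he)

lemma isPM_image {M : Finset (Sym2 (Fin N))} (hM : IsPM M) (σ : Equiv.Perm (Fin N)) :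
    IsPM (M.image (Sym2.map ⇑σ)) := by
  constructor
  · intro e' he'
    obtain ⟨e, he, rfl⟩ := Finset.mem_image.1 he'
    obtain ⟨p, q, rfl⟩ := sym2_exists_rep e
    have hpq : p ≠ q := fun h => (hM.1 _ he) (by rw [h]; exact Sym2.mk_isDiag_iff.2 rfl)
    rw [Sym2.map_pair_eq, Sym2.mk_isDiag_iff]
    exact fun h => hpq (σ.injective h)
  · intro v
    set w := σ.symm v with hw
    refine ⟨Sym2.map ⇑σ (pEdge M w), ⟨Finset.mem_image_of_mem _ (pEdge_mem hM w).1, ?_⟩, ?_⟩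
    · exact Sym2.mem_map.2 ⟨w, (pEdge_mem hM w).2, by simp [hw]⟩
    · rintro e' ⟨he', hve'⟩
      obtain ⟨u, hu, rfl⟩ := Finset.mem_image.1 he'
      obtain ⟨z, hz, hzv⟩ := Sym2.mem_map.1 hve'
      have : z = w := by rw [hw, ← hzv]; simp
      rw [← this, pEdge_eq hM hu hz]

lemma exists_perm_map {d d' : Sym2 (Fin N)} (hd : ¬d.IsDiag) (hd' : ¬d'.IsDiag) :
    ∃ σ : Equiv.Perm (Fin N), Sym2.map (⇑σ) d = d' := by
  obtain ⟨a, b, rfl⟩ := sym2_exists_rep d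
  obtain ⟨x, y, rfl⟩ := sym2_exists_rep d'
  rw [Sym2.mk_isDiag_iff] at hd hd'
  set σ₁ := Equiv.swap a x with hσ₁
  set σ₂ := Equiv.swap (σ₁ b) y with hσ₂
  refine ⟨σ₁.trans σ₂, ?_⟩
  rw [Sym2.map_pair_eq]
  have h1 : σ₁ b ≠ x := by
    intro h
    have : σ₁ b = σ₁ a := by rw [h, hσ₁, Equiv.swap_apply_left]
    exact hd (σ₁.injective this).symm
  have hx : (σ₁.trans σ₂) a = x := by
    simp only [Equiv.trans_apply, hσ₁, Equiv.swap_apply_left]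
    rw [hσ₂]
    exact Equiv.swap_apply_of_ne_of_ne h1.symm hd'
  have hy : (σ₁.trans σ₂) b = y := by
    simp only [Equiv.trans_apply]
    rw [hσ₂, Equiv.swap_apply_left]
  rw [hx, hy]

lemma card_pm_filter_eq {d d' : Sym2 (Fin N)} (hd : ¬d.IsDiag) (hd' : ¬d'.IsDiag) :
    ((PMset N).filter (fun M => d ∈ M)).card = ((PMset N).filter (fun M => d' ∈ M)).card := by
  obtain ⟨σ, hσ⟩ := exists_perm_map hd hd'
  have hcomp : ∀ (τ : Equiv.Perm (Fin N)) (z : Sym2 (Fin N)),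
      Sym2.map ⇑τ.symm (Sym2.map ⇑τ z) = z := by
    intro τ z
    induction z using Sym2.ind with
    | _ p q => simp [Sym2.map_pair_eq]
  have himg : ∀ (τ : Equiv.Perm (Fin N)) (M : Finset (Sym2 (Fin N))),
      (M.image (Sym2.map ⇑τ)).image (Sym2.map ⇑τ.symm) = M := by
    intro τ M
    rw [Finset.image_image]
    have h2 : ∀ z ∈ M, (Sym2.map ⇑τ.symm ∘ Sym2.map ⇑τ) z = id z := fun z _ => hcomp τ z
    rw [Finset.image_congr h2, Finset.image_id]
  refine Finset.card_bij' (fun M _ => M.image (Sym2.map ⇑σ))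
    (fun M _ => M.image (Sym2.map ⇑σ.symm)) ?_ ?_ ?_ ?_
  · intro M hMf
    rw [Finset.mem_filter] at hMf ⊢
    refine ⟨mem_PMset.2 (isPM_image (mem_PMset.1 hMf.1) σ), ?_⟩
    rw [← hσ]
    exact Finset.mem_image_of_mem _ hMf.2
  · intro M hMf
    rw [Finset.mem_filter] at hMf ⊢
    refine ⟨mem_PMset.2 (isPM_image (mem_PMset.1 hMf.1) σ.symm), ?_⟩
    have : Sym2.map ⇑σ.symm d' = d := by
      rw [← hσ, hcomp σ d]
    rw [← this]
    exact Finset.mem_image_of_mem _ hMf.2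
  · intro M _; exact himg σ M
  · intro M _
    have h3 : ∀ z ∈ M, (Sym2.map ⇑σ ∘ Sym2.map ⇑σ.symm) z = id z := by
      intro z _
      have := hcomp σ.symm z
      simpa using this
    show (((M.image (Sym2.map ⇑σ.symm))).image (Sym2.map ⇑σ)) = M
    rw [Finset.image_image, Finset.image_congr h3, Finset.image_id]

lemma Dint_eq_sum {M : Finset (Sym2 (Fin N))} :
    Dint c M = ∑ d ∈ M, (if c d = true then (1 : ℤ) else -1) := by
  rw [← Finset.sum_filter_add_sum_filter_not M (fun d => c d = true)]
  have h1 : ∑ d ∈ M.filter (fun d => c d = true), (if c d = true then (1 : ℤ) else -1)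
      = (cnt c true M : ℤ) := by
    rw [Finset.sum_congr rfl (fun d hd => if_pos (Finset.mem_filter.1 hd).2)]
    simp [cnt]
  have h2 : ∑ d ∈ M.filter (fun d => ¬ (c d = true)), (if c d = true then (1 : ℤ) else -1)
      = -(cnt c false M : ℤ) := by
    rw [Finset.sum_congr rfl (fun d hd => if_neg (Finset.mem_filter.1 hd).2)]
    have : M.filter (fun d => ¬ (c d = true)) = M.filter (fun d => c d = false) := by
      apply Finset.filter_congr; intro d _; simp
    simp [this, cnt]
  rw [h1, h2]
  unfold Dint
  ring

lemma sum_Dint_zero (hbal : cnt c true (allEdges N) = cnt c false (allEdges N)) :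
    ∑ M ∈ PMset N, Dint c M = 0 := by
  rcases Finset.eq_empty_or_nonempty (allEdges N) with hemp | ⟨d₀, hd₀⟩
  · apply Finset.sum_eq_zero
    intro M hM
    have : M = ∅ := Finset.subset_empty.1 (hemp ▸ pm_subset_allEdges (mem_PMset.1 hM))
    simp [this, Dint, cnt]
  · have step1 : ∀ M ∈ PMset N, Dint c M
        = ∑ d ∈ allEdges N, (if d ∈ M then (if c d = true then (1 : ℤ) else -1) else 0) := by
      intro M hM
      rw [Dint_eq_sum]
      rw [Finset.sum_ite_mem]
      rw [Finset.inter_eq_right.2 (pm_subset_allEdges (mem_PMset.1 hM))]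
    rw [Finset.sum_congr rfl step1, Finset.sum_comm]
    have step2 : ∀ d ∈ allEdges N,
        ∑ M ∈ PMset N, (if d ∈ M then (if c d = true then (1 : ℤ) else -1) else 0)
        = (((PMset N).filter (fun M => d ∈ M)).card : ℤ) * (if c d = true then (1 : ℤ) else -1) := by
      intro d _
      rw [← Finset.sum_filter]
      rw [Finset.sum_const]
      simp
    rw [Finset.sum_congr rfl step2]
    have step3 : ∀ d ∈ allEdges N,
        (((PMset N).filter (fun M => d ∈ M)).card : ℤ) * (if c d = true then (1 : ℤ) else -1)
        = (((PMset N).filter (fun M => d₀ ∈ M)).card : ℤ) * (if c d = true then (1 : ℤ) else -1) := by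
      intro d hd
      rw [card_pm_filter_eq (mem_allEdges.1 hd) (mem_allEdges.1 hd₀)]
    rw [Finset.sum_congr rfl step3, ← Finset.mul_sum]
    have step4 : ∑ d ∈ allEdges N, (if c d = true then (1 : ℤ) else -1) = 0 := by
      rw [← Dint_eq_sum (M := allEdges N)]
      unfold Dint
      rw [hbal]
      ring
    rw [step4, mul_zero]
end Averaging
section ExistsPM

def flp {m : ℕ} (v : Fin (2 * m)) : Fin (2 * m) :=
  ⟨if v.val % 2 = 0 then v.val + 1 else v.val - 1, by
    have := v.isLt
    split <;> omega⟩

lemma flp_ne {m : ℕ} (v : Fin (2 * m)) : flp v ≠ v := by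
  intro h
  have := congrArg Fin.val h
  simp only [flp] at this
  split at this <;> omega

lemma flp_flp {m : ℕ} (v : Fin (2 * m)) : flp (flp v) = v := by
  apply Fin.ext
  simp only [flp]
  split <;> split <;> omega

lemma exists_isPM (m : ℕ) : ∃ M : Finset (Sym2 (Fin (2 * m))), IsPM M := by
  classical
  refine ⟨(Finset.univ : Finset (Fin (2 * m))).image (fun v => s(v, flp v)), ?_, ?_⟩
  · intro e he
    obtain ⟨v, _, rfl⟩ := Finset.mem_image.1 he
    rw [Sym2.mk_isDiag_iff]
    exact fun h => flp_ne v h.symm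
  · intro v
    refine ⟨s(v, flp v), ⟨Finset.mem_image_of_mem _ (Finset.mem_univ v), Sym2.mem_mk_left _ _⟩, ?_⟩
    rintro e' ⟨he', hve'⟩
    obtain ⟨w, _, rfl⟩ := Finset.mem_image.1 he'
    rw [Sym2.mem_iff] at hve'
    rcases hve' with rfl | rfl
    · rfl
    · rw [flp_flp]
      exact Sym2.eq_swap

lemma exists_isPM_four (n : ℕ) : ∃ M : Finset (Sym2 (Fin (4 * n))), IsPM M := by
  have h : 2 * (2 * n) = 4 * n := by ring
  exact h ▸ exists_isPM (2 * n)
end ExistsPM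

section MinPair
attribute [local instance] Classical.propDecidable
variable {N : ℕ} {c : Sym2 (Fin N) → Bool}

/-- Produce an adjacent pair of perfect matchings with `D = 2` and `D = -2`,
related by a swap of two red edges into two black edges. -/
lemma adjacent_pair (hNeven : ∃ k, N = 4 * k)
    (Hz : ∀ M : Finset (Sym2 (Fin N)), IsPM M → Dint c M ≠ 0)
    (hone : (PMset N).Nonempty)
    (hbal : cnt c true (allEdges N) = cnt c false (allEdges N)) :
    ∃ (X X' : Finset (Sym2 (Fin N))) (a a' b b' : Fin N),
      IsPM X ∧ IsPM X' ∧ Dint c X = 2 ∧ Dint c X' = -2 ∧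
      s(a, a') ∈ X ∧ s(b, b') ∈ X ∧ s(a, a') ≠ s(b, b') ∧
      c s(a, a') = true ∧ c s(b, b') = true ∧
      c s(a, b) = false ∧ c s(a', b') = false ∧
      X' = (X \ {s(a, a'), s(b, b')}) ∪ {s(a, b), s(a', b')} := by
  obtain ⟨k, hk⟩ := hNeven
  have hsum := sum_Dint_zero (c := c) hbal
  -- a matching with nonnegative balance
  have hMp : ∃ M ∈ PMset N, 0 ≤ Dint c M := by
    by_contra hcon
    push_neg at hcon
    have := Finset.sum_neg hcon hone
    omega
  have hMm : ∃ M ∈ PMset N, Dint c M ≤ 0 := by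
    by_contra hcon
    push_neg at hcon
    have := Finset.sum_pos hcon hone
    omega
  obtain ⟨Mp, hMp1, hMp2⟩ := hMp
  obtain ⟨Mm, hMm1, hMm2⟩ := hMm
  set Pairs := ((PMset N) ×ˢ (PMset N)).filter
      (fun pr => 0 ≤ Dint c pr.1 ∧ Dint c pr.2 ≤ 0) with hPairs
  have hPne : Pairs.Nonempty := by
    refine ⟨(Mp, Mm), ?_⟩
    rw [hPairs, Finset.mem_filter, Finset.mem_product]
    exact ⟨⟨hMp1, hMm1⟩, hMp2, hMm2⟩
  obtain ⟨⟨X, Y⟩, hXYmem, hmin⟩ := Finset.exists_min_image Pairs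
    (fun pr => ((pr.1 \ pr.2) ∪ (pr.2 \ pr.1)).card) hPne
  rw [hPairs, Finset.mem_filter, Finset.mem_product] at hXYmem
  obtain ⟨⟨hXpm', hYpm'⟩, hDX0, hDY0⟩ := hXYmem
  have hX : IsPM X := mem_PMset.1 hXpm'
  have hY : IsPM Y := mem_PMset.1 hYpm'
  have hDX : 0 < Dint c X := lt_of_le_of_ne hDX0 (Ne.symm (Hz X hX))
  have hDY : Dint c Y < 0 := lt_of_le_of_ne hDY0 (Hz Y hY)
  have hcardX := two_mul_card_of_isPM hX
  have hcardY := two_mul_card_of_isPM hY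
  have hXY : X ≠ Y := by
    intro h
    rw [h] at hDX
    omega
  obtain ⟨d, hdY, hdX⟩ : ∃ d ∈ Y, d ∉ X := by
    by_contra hcon
    push_neg at hcon
    exact hXY (Finset.eq_of_subset_of_card_le hcon (by omega)).symm
  obtain ⟨u, v, rfl⟩ := sym2_exists_rep d
  have huv : u ≠ v := by
    intro h
    exact (hY.1 _ hdY) (by rw [h]; exact Sym2.mk_isDiag_iff.2 rfl)
  set xu := ptr X u with hxu
  set yv := ptr X v with hyv
  have he₁ : s(u, xu) ∈ X := ptr_edge_mem hX u
  have he₂ : s(v, yv) ∈ X := ptr_edge_mem hX v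
  have hxuv : xu ≠ v := by
    intro h
    rw [h] at he₁
    exact hdX he₁
  have hyvu : yv ≠ u := by
    intro h
    apply hdX
    have heq : s(u, v) = s(v, yv) := by rw [h, Sym2.eq_swap]
    rw [heq]
    exact he₂
  have hne12 : s(u, xu) ≠ s(v, yv) := by
    intro h
    have hv : v ∈ s(u, xu) := by rw [h]; exact Sym2.mem_mk_left v yv
    rw [Sym2.mem_iff] at hv
    rcases hv with rfl | rfl
    · exact huv rfl
    · exact hxuv rfl
  set X' := (X \ {s(u, xu), s(v, yv)}) ∪ {s(u, v), s(xu, yv)} with hX'def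
  have hPM' : IsPM X' := swap_isPM hX he₁ he₂ hne12
  have hDid := Dint_swap (c := c) hX he₁ he₂ hne12
  rw [← hX'def] at hDid
  -- e₁, e₂ are not in Y
  have he₁Y : s(u, xu) ∉ Y := by
    intro h
    have := pEdge_eq hY h (Sym2.mem_mk_left u xu)
    rw [pEdge_eq hY hdY (Sym2.mem_mk_left u v)] at this
    rcases Sym2.eq_iff.1 this.symm with ⟨h1, h2⟩ | ⟨h1, h2⟩
    · exact hxuv h2
    · exact huv h1
  have he₂Y : s(v, yv) ∉ Y := by
    intro h
    have := pEdge_eq hY h (Sym2.mem_mk_left v yv)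
    rw [pEdge_eq hY hdY (Sym2.mem_mk_right u v)] at this
    rcases Sym2.eq_iff.1 this.symm with ⟨h1, h2⟩ | ⟨h1, h2⟩
    · exact huv h1.symm
    · exact hyvu h2
  have hsub2 : ({s(u, xu), s(v, yv)} : Finset (Sym2 (Fin N))) ⊆ X \ Y := by
    intro t ht
    rcases Finset.mem_insert.1 ht with rfl | ht
    · exact Finset.mem_sdiff.2 ⟨he₁, he₁Y⟩
    · rw [Finset.mem_singleton.1 ht]
      exact Finset.mem_sdiff.2 ⟨he₂, he₂Y⟩
  have h1 : X' \ Y ⊆ ((X \ Y) \ {s(u, xu), s(v, yv)}) ∪ {s(xu, yv)} := by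
    intro t ht
    rw [Finset.mem_sdiff] at ht
    rcases Finset.mem_union.1 ht.1 with h | h
    · apply Finset.mem_union_left
      rw [Finset.mem_sdiff] at h ⊢
      exact ⟨Finset.mem_sdiff.2 ⟨h.1, ht.2⟩, h.2⟩
    · rcases Finset.mem_insert.1 h with rfl | h
      · exact absurd hdY ht.2
      · rw [Finset.mem_singleton.1 h]
        apply Finset.mem_union_right
        exact Finset.mem_singleton_self _
  have h2 : Y \ X' ⊆ (Y \ X).erase s(u, v) := by
    intro t ht
    rw [Finset.mem_sdiff] at ht
    rw [Finset.mem_erase]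
    constructor
    · intro h
      apply ht.2
      rw [h]
      exact Finset.mem_union_right _ (Finset.mem_insert_self _ _)
    · rw [Finset.mem_sdiff]
      refine ⟨ht.1, ?_⟩
      intro htX
      apply ht.2
      apply Finset.mem_union_left
      rw [Finset.mem_sdiff]
      refine ⟨htX, ?_⟩
      simp only [Finset.mem_insert, Finset.mem_singleton]
      push_neg
      constructor
      · intro h; rw [h] at ht; exact he₁Y ht.1
      · intro h; rw [h] at ht; exact he₂Y ht.1
  have hmu : ((X' \ Y) ∪ (Y \ X')).card < ((X \ Y) ∪ (Y \ X)).card := by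
    have c1 : ((X \ Y) ∪ (Y \ X)).card = (X \ Y).card + (Y \ X).card :=
      Finset.card_union_of_disjoint disjoint_sdiff_sdiff
    have c2 : ((X' \ Y) ∪ (Y \ X')).card ≤ (X' \ Y).card + (Y \ X').card :=
      Finset.card_union_le _ _
    have c3 : (X' \ Y).card ≤ ((X \ Y) \ {s(u, xu), s(v, yv)}).card + 1 := by
      calc (X' \ Y).card ≤ (((X \ Y) \ {s(u, xu), s(v, yv)}) ∪ {s(xu, yv)}).card :=
            Finset.card_le_card h1
        _ ≤ _ := by
            apply le_trans (Finset.card_union_le _ _)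
            simp
    have c4 : ((X \ Y) \ {s(u, xu), s(v, yv)}).card = (X \ Y).card - 2 := by
      rw [Finset.card_sdiff_of_subset hsub2, Finset.card_pair hne12]
    have c5 : (Y \ X').card ≤ (Y \ X).card - 1 := by
      calc (Y \ X').card ≤ ((Y \ X).erase s(u, v)).card := Finset.card_le_card h2
        _ = (Y \ X).card - 1 := Finset.card_erase_of_mem (Finset.mem_sdiff.2 ⟨hdY, hdX⟩)
    have c6 : 2 ≤ (X \ Y).card := by
      have := Finset.card_le_card hsub2
      rw [Finset.card_pair hne12] at this
      exact this
    have c7 : 1 ≤ (Y \ X).card := by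
      have : s(u, v) ∈ Y \ X := Finset.mem_sdiff.2 ⟨hdY, hdX⟩
      exact Finset.card_pos.2 ⟨_, this⟩
    omega
  have hDX' : Dint c X' < 0 := by
    rcases lt_or_ge (Dint c X') 0 with h | h
    · exact h
    · exfalso
      have hmem : (X', Y) ∈ Pairs := by
        rw [hPairs, Finset.mem_filter, Finset.mem_product]
        exact ⟨⟨mem_PMset.2 hPM', hYpm'⟩, h, hDY0⟩
      have := hmin (X', Y) hmem
      simp only at this
      omega
  -- extract exact values
  have hb1 := chi_nonneg (c := c) s(u, v)
  have hb2 := chi_le_one (c := c) s(u, v)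
  have hb3 := chi_nonneg (c := c) s(xu, yv)
  have hb4 := chi_le_one (c := c) s(xu, yv)
  have hb5 := chi_nonneg (c := c) s(u, xu)
  have hb6 := chi_le_one (c := c) s(u, xu)
  have hb7 := chi_nonneg (c := c) s(v, yv)
  have hb8 := chi_le_one (c := c) s(v, yv)
  have hevX : Dint c X + 2 * (cnt c false X : ℤ) = X.card := Dint_even hX
  have hevX' : Dint c X' + 2 * (cnt c false X' : ℤ) = X'.card := Dint_even hPM'
  have hcardX' := two_mul_card_of_isPM hPM'
  have hDX2 : Dint c X = 2 ∧ Dint c X' = -2 ∧ chi c s(u, xu) = 1 ∧ chi c s(v, yv) = 1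
      ∧ chi c s(u, v) = 0 ∧ chi c s(xu, yv) = 0 := by
    have hXcn : X.card = 2 * k := by
      have h1 : 2 * X.card = 4 * k := by rw [hcardX, hk]
      omega
    have hXcn' : X'.card = 2 * k := by
      have h1 : 2 * X'.card = 4 * k := by rw [hcardX', hk]
      omega
    rw [hXcn] at hevX
    rw [hXcn'] at hevX'
    omega
  have hto_true : ∀ d : Sym2 (Fin N), chi c d = 1 → c d = true := by
    intro d hd
    by_contra h
    unfold chi at hd
    rw [if_neg h] at hd
    omega
  have hto_false : ∀ d : Sym2 (Fin N), chi c d = 0 → c d = false := by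
    intro d hd
    rcases Bool.eq_false_or_eq_true (c d) with h | h
    · unfold chi at hd
      rw [if_pos h] at hd
      omega
    · exact h
  exact ⟨X, X', u, xu, v, yv, hX, hPM', hDX2.1, hDX2.2.1, he₁, he₂, hne12,
    hto_true _ hDX2.2.2.1, hto_true _ hDX2.2.2.2.1,
    hto_false _ hDX2.2.2.2.2.1, hto_false _ hDX2.2.2.2.2.2, hX'def⟩
end MinPair
section Parity

lemma even_card_of_invol {β : Type*} [DecidableEq β] :
    ∀ (n : ℕ) (A : Finset β) (φ : β → β), A.card = n →
    (∀ x ∈ A, φ x ∈ A) → (∀ x ∈ A, φ (φ x) = x) → (∀ x ∈ A, φ x ≠ x) →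
    Even A.card := by
  intro n
  induction n using Nat.strong_induction_on with
  | _ n ih =>
    intro A φ hn h1 h2 h3
    rcases Finset.eq_empty_or_nonempty A with rfl | ⟨x, hx⟩
    · simp
    · have hφx : φ x ∈ A := h1 x hx
      have hnex : φ x ≠ x := h3 x hx
      have hcard2 : 2 ≤ A.card := Finset.one_lt_card.2 ⟨φ x, hφx, x, hx, hnex⟩
      set B := (A.erase x).erase (φ x) with hB
      have hBmem : ∀ y, y ∈ B ↔ (y ∈ A ∧ y ≠ x ∧ y ≠ φ x) := by
        intro y
        rw [hB, Finset.mem_erase, Finset.mem_erase]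
        tauto
      have hcardB : B.card = A.card - 2 := by
        rw [hB, Finset.card_erase_of_mem (Finset.mem_erase.2 ⟨hnex, hφx⟩),
          Finset.card_erase_of_mem hx]
        omega
      have hEvenB : Even B.card := by
        apply ih (A.card - 2) (by omega) B φ (by omega)
        · intro y hy
          rw [hBmem] at hy ⊢
          refine ⟨h1 y hy.1, ?_, ?_⟩
          · intro h
            exact hy.2.2 (by rw [← h2 y hy.1, h])
          · intro h
            have := congrArg φ h
            rw [h2 y hy.1, h2 x hx] at this
            exact hy.2.1 this
        · intro y hy
          exact h2 y ((hBmem y).1 hy).1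
        · intro y hy
          exact h3 y ((hBmem y).1 hy).1
      obtain ⟨r, hr⟩ := hEvenB
      exact ⟨r + 1, by omega⟩

lemma card_allEdges (N : ℕ) : (allEdges N).card = N.choose 2 := by
  classical
  rw [allEdges, ← Fintype.card_subtype, Sym2.card_subtype_not_diag, Fintype.card_fin]
end Parity
section Main
attribute [local instance] Classical.propDecidable

set_option maxHeartbeats 2000000 in
/-- Any balanced 2-edge-colouring of `K_{4n}` (n ≥ 1) admits a
perfect matching with equally many edges of each colour. -/
theorem stmt0 (n : ℕ) (hn : 1 ≤ n) (c : Sym2 (Fin (4 * n)) → Bool)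
    (hbal : cnt c true (allEdges (4 * n)) = cnt c false (allEdges (4 * n))) :
    ∃ M : Finset (Sym2 (Fin (4 * n))), IsPM M ∧ cnt c true M = cnt c false M := by
  by_contra hcon
  push_neg at hcon
  have Hz : ∀ M : Finset (Sym2 (Fin (4 * n))), IsPM M → Dint c M ≠ 0 := by
    intro M hM h0
    apply hcon M hM
    unfold Dint at h0
    omega
  have hone : (PMset (4 * n)).Nonempty := by
    obtain ⟨M, hM⟩ := exists_isPM_four n
    exact ⟨M, mem_PMset.2 hM⟩
  obtain ⟨X, X', a, a', b, b', hX, hX', hDX, hDX', hEa, hEb, hEne, hca, hcb, hcab, hca'b', hXdef⟩ :=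
    adjacent_pair ⟨n, rfl⟩ Hz hone hbal
  obtain ⟨haa', hbb', hab, hab', ha'b, ha'b'⟩ := four_distinct hX hEa hEb hEne
  -- the new edges of X'
  have hfab : s(a, b) ∈ X' := by
    rw [hXdef]; exact Finset.mem_union_right _ (Finset.mem_insert_self _ _)
  have hfa'b' : s(a', b') ∈ X' := by
    rw [hXdef]
    exact Finset.mem_union_right _ (Finset.mem_insert_of_mem (Finset.mem_singleton_self _))
  have hXsub : X \ {s(a, a'), s(b, b')} ⊆ X' := by
    rw [hXdef]; exact Finset.subset_union_left
  -- partners in X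
  have hpa : ptr X a = a' := ptr_eq_of hX hEa haa'
  have hpa' : ptr X a' = a := by rw [← hpa, ptr_invol hX]
  have hpb : ptr X b = b' := ptr_eq_of hX hEb hbb'
  have hpb' : ptr X b' = b := by rw [← hpb, ptr_invol hX]
  -- partners in X'
  have hqa : ptr X' a = b := ptr_eq_of hX' hfab hab
  have hqb : ptr X' b = a := by rw [← hqa, ptr_invol hX']
  have hqa' : ptr X' a' = b' := ptr_eq_of hX' hfa'b' ha'b'
  have hqb' : ptr X' b' = a' := by rw [← hqa', ptr_invol hX']
  -- colour classes
  set VRs : Finset (Fin (4 * n)) := Finset.univ.filter (fun w => c (pEdge X w) = true) with hVRs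
  set VBs : Finset (Fin (4 * n)) := Finset.univ.filter (fun w => c (pEdge X w) = false) with hVBs
  set Qs : Finset (Fin (4 * n)) := {a, a', b, b'} with hQs
  have hmemVR : ∀ w, w ∈ VRs ↔ c (pEdge X w) = true := by
    intro w; rw [hVRs]; simp
  have hmemVB : ∀ w, w ∈ VBs ↔ c (pEdge X w) = false := by
    intro w; rw [hVBs]; simp
  have hVRB : ∀ w : Fin (4 * n), w ∈ VRs ∨ w ∈ VBs := by
    intro w
    rcases Bool.eq_false_or_eq_true (c (pEdge X w)) with h | h
    · exact Or.inl ((hmemVR w).2 h)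
    · exact Or.inr ((hmemVB w).2 h)
  have hVRnB : ∀ w : Fin (4 * n), w ∈ VRs → w ∉ VBs := by
    intro w h1 h2
    rw [hmemVR] at h1
    rw [hmemVB] at h2
    rw [h1] at h2
    exact Bool.noConfusion h2
  have hpedgea : pEdge X a = s(a, a') := pEdge_eq hX hEa (Sym2.mem_mk_left _ _)
  have hpedgea' : pEdge X a' = s(a, a') := pEdge_eq hX hEa (Sym2.mem_mk_right _ _)
  have hpedgeb : pEdge X b = s(b, b') := pEdge_eq hX hEb (Sym2.mem_mk_left _ _)
  have hpedgeb' : pEdge X b' = s(b, b') := pEdge_eq hX hEb (Sym2.mem_mk_right _ _)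
  have hmemQ : ∀ w, w ∈ Qs ↔ (w = a ∨ w = a' ∨ w = b ∨ w = b') := by
    intro w; rw [hQs]; simp
  have hQR : ∀ w ∈ Qs, w ∈ VRs := by
    intro w hw
    rw [hmemQ] at hw
    rw [hmemVR]
    rcases hw with rfl | rfl | rfl | rfl
    · rw [hpedgea]; exact hca
    · rw [hpedgea']; exact hca
    · rw [hpedgeb]; exact hcb
    · rw [hpedgeb']; exact hcb
  have hpVR : ∀ w ∈ VRs, ptr X w ∈ VRs := by
    intro w hw
    rw [hmemVR] at hw ⊢
    rw [pEdge_ptr hX]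
    exact hw
  have hpVB : ∀ w ∈ VBs, ptr X w ∈ VBs := by
    intro w hw
    rw [hmemVB] at hw ⊢
    rw [pEdge_ptr hX]
    exact hw
  -- edges of vertices in VBs are shared between X and X'
  have hBshared : ∀ z ∈ VBs, s(z, ptr X z) ∈ X' ∧ ptr X' z = ptr X z := by
    intro z hz
    rw [hmemVB] at hz
    have h1 : s(z, ptr X z) ∈ X := ptr_edge_mem hX z
    have hcz : c s(z, ptr X z) = false := by rw [← ptr_spec hX z]; exact hz
    have h2 : s(z, ptr X z) ∈ X' := by
      apply hXsub
      rw [Finset.mem_sdiff]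
      refine ⟨h1, ?_⟩
      simp only [Finset.mem_insert, Finset.mem_singleton]
      push_neg
      constructor
      · intro h; rw [h] at hcz; rw [hca] at hcz; exact Bool.noConfusion hcz
      · intro h; rw [h] at hcz; rw [hcb] at hcz; exact Bool.noConfusion hcz
    exact ⟨h2, ptr_eq_of hX' h2 (Ne.symm (ptr_ne hX z))⟩
  -- edges of vertices in VRs \ Qs are shared between X and X'
  have hGshared : ∀ w ∈ VRs, w ∉ Qs →
      s(w, ptr X w) ∈ X' ∧ ptr X' w = ptr X w ∧ ptr X w ∉ Qs := by
    intro w hw hwQ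
    have hmem : s(w, ptr X w) ∈ X := ptr_edge_mem hX w
    have hnea : s(w, ptr X w) ≠ s(a, a') := by
      intro h
      apply hwQ
      rw [hmemQ]
      have hw2 : w ∈ s(a, a') := by rw [← h]; exact Sym2.mem_mk_left _ _
      rw [Sym2.mem_iff] at hw2
      tauto
    have hneb : s(w, ptr X w) ≠ s(b, b') := by
      intro h
      apply hwQ
      rw [hmemQ]
      have hw2 : w ∈ s(b, b') := by rw [← h]; exact Sym2.mem_mk_left _ _
      rw [Sym2.mem_iff] at hw2
      tauto
    have h2 : s(w, ptr X w) ∈ X' := by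
      apply hXsub
      rw [Finset.mem_sdiff]
      refine ⟨hmem, ?_⟩
      simp only [Finset.mem_insert, Finset.mem_singleton]
      push_neg
      exact ⟨hnea, hneb⟩
    refine ⟨h2, ptr_eq_of hX' h2 (Ne.symm (ptr_ne hX w)), ?_⟩
    intro hpQ
    rw [hmemQ] at hpQ
    have key : pEdge X w = pEdge X (ptr X w) := (pEdge_ptr hX w).symm
    rcases hpQ with h | h | h | h
    · apply hnea; rw [← ptr_spec hX w, key, h, hpedgea]
    · apply hnea; rw [← ptr_spec hX w, key, h, hpedgea']
    · apply hneb; rw [← ptr_spec hX w, key, h, hpedgeb]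
    · apply hneb; rw [← ptr_spec hX w, key, h, hpedgeb']
  -- the X'-partner of a vertex of Qs stays in Qs, with a black X'-edge
  have hQ'cases : ∀ w ∈ Qs, ptr X' w ∈ Qs ∧ c s(w, ptr X' w) = false := by
    intro w hw
    rw [hmemQ] at hw
    rcases hw with rfl | rfl | rfl | rfl
    · rw [hqa]; exact ⟨(hmemQ b).2 (Or.inr (Or.inr (Or.inl rfl))), hcab⟩
    · rw [hqa']; exact ⟨(hmemQ b').2 (Or.inr (Or.inr (Or.inr rfl))), hca'b'⟩
    · rw [hqb]
      refine ⟨(hmemQ a).2 (Or.inl rfl), ?_⟩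
      rw [Sym2.eq_swap]; exact hcab
    · rw [hqb']
      refine ⟨(hmemQ a').2 (Or.inr (Or.inl rfl)), ?_⟩
      rw [Sym2.eq_swap]; exact hca'b'
  -- monochromatic pairings inside VRs (via X)
  have monoR : ∀ w z, w ∈ VRs → z ∈ VRs → z ≠ w → z ≠ ptr X w →
      c s(w, z) = c s(ptr X w, ptr X z) := by
    intro w z hw hz hzw hzpw
    have hne : s(w, ptr X w) ≠ s(z, ptr X z) := by
      intro h
      have hz2 : z ∈ s(w, ptr X w) := by rw [h]; exact Sym2.mem_mk_left _ _
      rw [Sym2.mem_iff] at hz2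
      rcases hz2 with h1 | h1
      · exact hzw h1
      · exact hzpw h1
    have hcw : c s(w, ptr X w) = true := by rw [← ptr_spec hX w]; exact (hmemVR w).1 hw
    have hcz : c s(z, ptr X z) = true := by rw [← ptr_spec hX z]; exact (hmemVR z).1 hz
    exact mono_red Hz hX hDX (ptr_edge_mem hX w) (ptr_edge_mem hX z) hne hcw hcz
  -- monochromatic pairings inside VBs (via X')
  have monoB : ∀ w z, z ∈ VBs → w ∈ VBs → z ≠ w →
      c s(w, z) = c s(ptr X w, ptr X z) := by
    intro w z hz hw hzw
    by_cases hzpw : z = ptr X w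
    · have h1 : ptr X z = w := by rw [hzpw, ptr_invol hX]
      rw [h1, ← hzpw, Sym2.eq_swap]
    · have hne : s(w, ptr X w) ≠ s(z, ptr X z) := by
        intro h
        have hz2 : z ∈ s(w, ptr X w) := by rw [h]; exact Sym2.mem_mk_left _ _
        rw [Sym2.mem_iff] at hz2
        rcases hz2 with h1 | h1
        · exact hzw h1
        · exact hzpw h1
      have hcw : c s(w, ptr X w) = false := by rw [← ptr_spec hX w]; exact (hmemVB w).1 hw
      have hcz : c s(z, ptr X z) = false := by rw [← ptr_spec hX z]; exact (hmemVB z).1 hz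
      exact mono_black Hz hX' hDX' (hBshared w hw).1 (hBshared z hz).1 hne hcw hcz
  -- monochromatic pairings between Qs and VBs (via X')
  have monoQ : ∀ w z, w ∈ Qs → z ∈ VBs →
      c s(w, z) = c s(ptr X' w, ptr X z) := by
    intro w z hw hz
    have hq := hQ'cases w hw
    have hne : s(w, ptr X' w) ≠ s(z, ptr X z) := by
      intro h
      have hz2 : z ∈ s(w, ptr X' w) := by rw [h]; exact Sym2.mem_mk_left _ _
      rw [Sym2.mem_iff] at hz2
      rcases hz2 with h1 | h1
      · exact hVRnB z (by rw [h1]; exact hQR w hw) hz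
      · exact hVRnB z (by rw [h1]; exact hQR _ hq.1) hz
    have hcz : c s(z, ptr X z) = false := by rw [← ptr_spec hX z]; exact (hmemVB z).1 hz
    exact mono_black Hz hX' hDX' (ptr_edge_mem hX' w) (hBshared z hz).1 hne hq.2 hcz
  -- mixed pairings between VRs \ Qs and VBs
  have mixed : ∀ w z, w ∈ VRs → w ∉ Qs → z ∈ VBs →
      c s(w, z) = ! c s(ptr X w, ptr X z) := by
    intro w z hw hwQ hz
    have hG := hGshared w hw hwQ
    have hcw : c s(w, ptr X w) = true := by rw [← ptr_spec hX w]; exact (hmemVR w).1 hw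
    have hcz : c s(z, ptr X z) = false := by rw [← ptr_spec hX z]; exact (hmemVB z).1 hz
    have hne : s(w, ptr X w) ≠ s(z, ptr X z) := by
      intro h
      rw [h, hcz] at hcw
      exact Bool.noConfusion hcw
    exact mixed_pairing Hz hX hX' hDX hDX' (ptr_edge_mem hX w) (ptr_edge_mem hX z)
      hG.1 (hBshared z hz).1 hne hcw hcz
  -- the four regions
  set reg1 : Finset (Sym2 (Fin (4 * n))) :=
    (allEdges (4 * n)).filter (fun d => d ∉ X ∧ ∀ w ∈ d, w ∈ VRs) with hreg1
  set reg2 : Finset (Sym2 (Fin (4 * n))) :=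
    (allEdges (4 * n)).filter (fun d => d ∉ X ∧ ∀ w ∈ d, w ∈ VBs) with hreg2
  set reg3 : Finset (Sym2 (Fin (4 * n))) :=
    (allEdges (4 * n)).filter (fun d => (∃ w ∈ d, w ∈ VRs ∧ w ∉ Qs) ∧ ∃ w ∈ d, w ∈ VBs) with hreg3
  set reg4 : Finset (Sym2 (Fin (4 * n))) :=
    (allEdges (4 * n)).filter (fun d => (∃ w ∈ d, w ∈ Qs) ∧ ∃ w ∈ d, w ∈ VBs) with hreg4
  -- partition of all edges
  have hU : allEdges (4 * n) = X ∪ reg1 ∪ reg2 ∪ reg3 ∪ reg4 := by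
    apply Finset.Subset.antisymm
    · intro d hd
      obtain ⟨w, z, rfl⟩ := sym2_exists_rep d
      have hwz : w ≠ z := by
        have h0 := mem_allEdges.1 hd
        rw [Sym2.mk_isDiag_iff] at h0
        exact h0
      by_cases hdX : s(w, z) ∈ X
      · exact Finset.mem_union_left _ (Finset.mem_union_left _ (Finset.mem_union_left _
          (Finset.mem_union_left _ hdX)))
      · rcases hVRB w with hw | hw
        · rcases hVRB z with hz | hz
          · refine Finset.mem_union_left _ (Finset.mem_union_left _ (Finset.mem_union_left _
              (Finset.mem_union_right _ ?_)))
            rw [hreg1, Finset.mem_filter]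
            refine ⟨hd, hdX, ?_⟩
            intro y hy
            rw [Sym2.mem_iff] at hy
            rcases hy with rfl | rfl
            · exact hw
            · exact hz
          · by_cases hwQ : w ∈ Qs
            · refine Finset.mem_union_right _ ?_
              rw [hreg4, Finset.mem_filter]
              exact ⟨hd, ⟨w, Sym2.mem_mk_left _ _, hwQ⟩, ⟨z, Sym2.mem_mk_right _ _, hz⟩⟩
            · refine Finset.mem_union_left _ (Finset.mem_union_right _ ?_)
              rw [hreg3, Finset.mem_filter]
              exact ⟨hd, ⟨w, Sym2.mem_mk_left _ _, hw, hwQ⟩, ⟨z, Sym2.mem_mk_right _ _, hz⟩⟩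
        · rcases hVRB z with hz | hz
          · by_cases hzQ : z ∈ Qs
            · refine Finset.mem_union_right _ ?_
              rw [hreg4, Finset.mem_filter]
              exact ⟨hd, ⟨z, Sym2.mem_mk_right _ _, hzQ⟩, ⟨w, Sym2.mem_mk_left _ _, hw⟩⟩
            · refine Finset.mem_union_left _ (Finset.mem_union_right _ ?_)
              rw [hreg3, Finset.mem_filter]
              exact ⟨hd, ⟨z, Sym2.mem_mk_right _ _, hz, hzQ⟩, ⟨w, Sym2.mem_mk_left _ _, hw⟩⟩
          · refine Finset.mem_union_left _ (Finset.mem_union_left _ (Finset.mem_union_right _ ?_))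
            rw [hreg2, Finset.mem_filter]
            refine ⟨hd, hdX, ?_⟩
            intro y hy
            rw [Sym2.mem_iff] at hy
            rcases hy with rfl | rfl
            · exact hw
            · exact hz
    · refine Finset.union_subset (Finset.union_subset (Finset.union_subset
        (Finset.union_subset ?_ ?_) ?_) ?_) ?_
      · exact pm_subset_allEdges hX
      · rw [hreg1]; exact Finset.filter_subset _ _
      · rw [hreg2]; exact Finset.filter_subset _ _
      · rw [hreg3]; exact Finset.filter_subset _ _
      · rw [hreg4]; exact Finset.filter_subset _ _
  -- an X-edge has all its vertices in one colour class
  have hXcol : ∀ d ∈ X, ∀ y ∈ d, c (pEdge X y) = c d := by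
    intro d hd y hy
    rw [pEdge_eq hX hd hy]
  have hdisj : Disjoint X reg1 ∧ Disjoint (X ∪ reg1) reg2 ∧
      Disjoint (X ∪ reg1 ∪ reg2) reg3 ∧ Disjoint (X ∪ reg1 ∪ reg2 ∪ reg3) reg4 := by
    have hd1 : Disjoint X reg1 := by
      rw [Finset.disjoint_left]
      intro d hdX hd1
      rw [hreg1, Finset.mem_filter] at hd1
      exact hd1.2.1 hdX
    have hd2 : Disjoint X reg2 := by
      rw [Finset.disjoint_left]
      intro d hdX hd2
      rw [hreg2, Finset.mem_filter] at hd2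
      exact hd2.2.1 hdX
    have hd12 : Disjoint reg1 reg2 := by
      rw [Finset.disjoint_left]
      intro d hd1 hd2
      rw [hreg1, Finset.mem_filter] at hd1
      rw [hreg2, Finset.mem_filter] at hd2
      obtain ⟨w, z, rfl⟩ := sym2_exists_rep d
      exact hVRnB w (hd1.2.2 w (Sym2.mem_mk_left _ _)) (hd2.2.2 w (Sym2.mem_mk_left _ _))
    have hd3X : Disjoint X reg3 := by
      rw [Finset.disjoint_left]
      intro d hdX hd3
      rw [hreg3, Finset.mem_filter] at hd3
      obtain ⟨w0, hw0d, hw0R, _⟩ := hd3.2.1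
      obtain ⟨z0, hz0d, hz0B⟩ := hd3.2.2
      have e1 := hXcol d hdX w0 hw0d
      have e2 := hXcol d hdX z0 hz0d
      rw [hmemVR] at hw0R
      rw [hmemVB] at hz0B
      rw [e1] at hw0R
      rw [e2] at hz0B
      rw [hw0R] at hz0B
      exact Bool.noConfusion hz0B
    have hd13 : Disjoint reg1 reg3 := by
      rw [Finset.disjoint_left]
      intro d hd1 hd3
      rw [hreg1, Finset.mem_filter] at hd1
      rw [hreg3, Finset.mem_filter] at hd3
      obtain ⟨z0, hz0d, hz0B⟩ := hd3.2.2
      exact hVRnB z0 (hd1.2.2 z0 hz0d) hz0B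
    have hd23 : Disjoint reg2 reg3 := by
      rw [Finset.disjoint_left]
      intro d hd2 hd3
      rw [hreg2, Finset.mem_filter] at hd2
      rw [hreg3, Finset.mem_filter] at hd3
      obtain ⟨w0, hw0d, hw0R, _⟩ := hd3.2.1
      exact hVRnB w0 hw0R (hd2.2.2 w0 hw0d)
    have hd4X : Disjoint X reg4 := by
      rw [Finset.disjoint_left]
      intro d hdX hd4
      rw [hreg4, Finset.mem_filter] at hd4
      obtain ⟨q0, hq0d, hq0Q⟩ := hd4.2.1
      obtain ⟨z0, hz0d, hz0B⟩ := hd4.2.2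
      have e1 := hXcol d hdX q0 hq0d
      have e2 := hXcol d hdX z0 hz0d
      have hq0R := hQR q0 hq0Q
      rw [hmemVR] at hq0R
      rw [hmemVB] at hz0B
      rw [e1] at hq0R
      rw [e2] at hz0B
      rw [hq0R] at hz0B
      exact Bool.noConfusion hz0B
    have hd14 : Disjoint reg1 reg4 := by
      rw [Finset.disjoint_left]
      intro d hd1 hd4
      rw [hreg1, Finset.mem_filter] at hd1
      rw [hreg4, Finset.mem_filter] at hd4
      obtain ⟨z0, hz0d, hz0B⟩ := hd4.2.2
      exact hVRnB z0 (hd1.2.2 z0 hz0d) hz0B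
    have hd24 : Disjoint reg2 reg4 := by
      rw [Finset.disjoint_left]
      intro d hd2 hd4
      rw [hreg2, Finset.mem_filter] at hd2
      rw [hreg4, Finset.mem_filter] at hd4
      obtain ⟨q0, hq0d, hq0Q⟩ := hd4.2.1
      exact hVRnB q0 (hQR q0 hq0Q) (hd2.2.2 q0 hq0d)
    have hd34 : Disjoint reg3 reg4 := by
      rw [Finset.disjoint_left]
      intro d hd3 hd4
      rw [hreg3, Finset.mem_filter] at hd3
      rw [hreg4, Finset.mem_filter] at hd4
      obtain ⟨x, y, rfl⟩ := sym2_exists_rep d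
      obtain ⟨w0, hw0d, hw0R, hw0Q⟩ := hd3.2.1
      obtain ⟨q0, hq0d, hq0Q⟩ := hd4.2.1
      obtain ⟨z0, hz0d, hz0B⟩ := hd4.2.2
      have hw0B : w0 ∉ VBs := hVRnB w0 hw0R
      have hq0B : q0 ∉ VBs := hVRnB q0 (hQR q0 hq0Q)
      have hwz0 : w0 ≠ z0 := fun h => hw0B (h ▸ hz0B)
      have hqz0 : q0 ≠ z0 := fun h => hq0B (h ▸ hz0B)
      rw [Sym2.mem_iff] at hw0d hq0d hz0d
      have hweq : w0 = q0 := by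
        rcases hw0d with h1 | h1 <;> rcases hq0d with h2 | h2
        · rw [h1, h2]
        · exfalso
          rcases hz0d with h3 | h3
          · exact hwz0 (h1.trans h3.symm)
          · exact hqz0 (h2.trans h3.symm)
        · exfalso
          rcases hz0d with h3 | h3
          · exact hqz0 (h2.trans h3.symm)
          · exact hwz0 (h1.trans h3.symm)
        · rw [h1, h2]
      exact hw0Q (by rw [hweq]; exact hq0Q)
    refine ⟨hd1, ?_, ?_, ?_⟩
    · rw [Finset.disjoint_union_left]
      exact ⟨hd2, hd12⟩
    · rw [Finset.disjoint_union_left, Finset.disjoint_union_left]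
      exact ⟨⟨hd3X, hd13⟩, hd23⟩
    · rw [Finset.disjoint_union_left, Finset.disjoint_union_left, Finset.disjoint_union_left]
      exact ⟨⟨⟨hd4X, hd14⟩, hd24⟩, hd34⟩
  -- black edge counts
  have hBl : cnt c false (allEdges (4 * n)) = cnt c false X + cnt c false reg1 + cnt c false reg2
      + cnt c false reg3 + cnt c false reg4 := by
    rw [hU, cnt_union_of_disjoint hdisj.2.2.2, cnt_union_of_disjoint hdisj.2.2.1,
      cnt_union_of_disjoint hdisj.2.1, cnt_union_of_disjoint hdisj.1]
  have hmem1 : ∀ w z : Fin (4 * n), s(w, z) ∈ reg1 ↔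
      (w ≠ z ∧ s(w, z) ∉ X ∧ w ∈ VRs ∧ z ∈ VRs) := by
    intro w z
    rw [hreg1, Finset.mem_filter, mem_allEdges, Sym2.mk_isDiag_iff]
    constructor
    · rintro ⟨h1, h2, h3⟩
      exact ⟨h1, h2, h3 w (Sym2.mem_mk_left _ _), h3 z (Sym2.mem_mk_right _ _)⟩
    · rintro ⟨h1, h2, h3, h4⟩
      refine ⟨h1, h2, ?_⟩
      intro y hy
      rw [Sym2.mem_iff] at hy
      rcases hy with rfl | rfl
      · exact h3
      · exact h4
  have hmem2 : ∀ w z : Fin (4 * n), s(w, z) ∈ reg2 ↔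
      (w ≠ z ∧ s(w, z) ∉ X ∧ w ∈ VBs ∧ z ∈ VBs) := by
    intro w z
    rw [hreg2, Finset.mem_filter, mem_allEdges, Sym2.mk_isDiag_iff]
    constructor
    · rintro ⟨h1, h2, h3⟩
      exact ⟨h1, h2, h3 w (Sym2.mem_mk_left _ _), h3 z (Sym2.mem_mk_right _ _)⟩
    · rintro ⟨h1, h2, h3, h4⟩
      refine ⟨h1, h2, ?_⟩
      intro y hy
      rw [Sym2.mem_iff] at hy
      rcases hy with rfl | rfl
      · exact h3
      · exact h4
  -- standard facts about the involution d ↦ Sym2.map (ptr X) d off the matching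
  have hptrne : ∀ w z : Fin (4 * n), w ≠ z → ptr X w ≠ ptr X z := by
    intro w z hwz h
    apply hwz
    have h2 := congrArg (ptr X) h
    rw [ptr_invol hX, ptr_invol hX] at h2
    exact h2
  have hmapX : ∀ w z : Fin (4 * n), s(w, z) ∉ X → z ≠ ptr X w ∧ s(ptr X w, ptr X z) ∉ X := by
    intro w z hdX
    have hzpw : z ≠ ptr X w := by
      intro h
      apply hdX
      rw [h]
      exact ptr_edge_mem hX w
    refine ⟨hzpw, ?_⟩
    intro hmem
    have heq := edge_eq_ptr hX hmem (Sym2.mem_mk_left _ _)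
    rw [ptr_invol hX] at heq
    rcases Sym2.eq_iff.1 heq with ⟨h1, h2⟩ | ⟨h1, h2⟩
    · apply hzpw
      have h3 := congrArg (ptr X) h2
      rw [ptr_invol hX] at h3
      exact h3
    · exact (ptr_ne hX w) h1
  have hEv1 : Even (cnt c false reg1) := by
    unfold cnt
    have key1 : ∀ e ∈ reg1.filter (fun e => c e = false),
        Sym2.map (ptr X) e ∈ reg1.filter (fun e => c e = false) ∧
        Sym2.map (ptr X) (Sym2.map (ptr X) e) = e ∧ Sym2.map (ptr X) e ≠ e := by
      intro e he
      rw [Finset.mem_filter] at he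
      obtain ⟨w, z, rfl⟩ := sym2_exists_rep e
      obtain ⟨hwz, hdX, hw, hz⟩ := (hmem1 w z).1 he.1
      obtain ⟨hzpw, hmX⟩ := hmapX w z hdX
      have hmono := monoR w z hw hz (Ne.symm hwz) hzpw
      refine ⟨?_, ?_, ?_⟩
      · rw [Finset.mem_filter, Sym2.map_pair_eq]
        refine ⟨(hmem1 _ _).2 ⟨hptrne w z hwz, hmX, hpVR w hw, hpVR z hz⟩, ?_⟩
        rw [← hmono]
        exact he.2
      · rw [Sym2.map_pair_eq, Sym2.map_pair_eq, ptr_invol hX, ptr_invol hX]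
      · rw [Sym2.map_pair_eq]
        intro h
        rcases Sym2.eq_iff.1 h with ⟨h1, h2⟩ | ⟨h1, h2⟩
        · exact (ptr_ne hX w) h1
        · exact hzpw h1.symm
    exact even_card_of_invol _ _ _ rfl (fun e he => (key1 e he).1)
      (fun e he => (key1 e he).2.1) (fun e he => (key1 e he).2.2)
  have hEv2 : Even (cnt c false reg2) := by
    unfold cnt
    have key2 : ∀ e ∈ reg2.filter (fun e => c e = false),
        Sym2.map (ptr X) e ∈ reg2.filter (fun e => c e = false) ∧
        Sym2.map (ptr X) (Sym2.map (ptr X) e) = e ∧ Sym2.map (ptr X) e ≠ e := by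
      intro e he
      rw [Finset.mem_filter] at he
      obtain ⟨w, z, rfl⟩ := sym2_exists_rep e
      obtain ⟨hwz, hdX, hw, hz⟩ := (hmem2 w z).1 he.1
      obtain ⟨hzpw, hmX⟩ := hmapX w z hdX
      have hmono := monoB w z hz hw (Ne.symm hwz)
      refine ⟨?_, ?_, ?_⟩
      · rw [Finset.mem_filter, Sym2.map_pair_eq]
        refine ⟨(hmem2 _ _).2 ⟨hptrne w z hwz, hmX, hpVB w hw, hpVB z hz⟩, ?_⟩
        rw [← hmono]
        exact he.2
      · rw [Sym2.map_pair_eq, Sym2.map_pair_eq, ptr_invol hX, ptr_invol hX]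
      · rw [Sym2.map_pair_eq]
        intro h
        rcases Sym2.eq_iff.1 h with ⟨h1, h2⟩ | ⟨h1, h2⟩
        · exact (ptr_ne hX w) h1
        · exact hzpw h1.symm
    exact even_card_of_invol _ _ _ rfl (fun e he => (key2 e he).1)
      (fun e he => (key2 e he).2.1) (fun e he => (key2 e he).2.2)
  have hEv3 : Even (cnt c false reg3) := by
    unfold cnt
    have hmem3 : ∀ d ∈ reg3, ∃ w z, d = s(w, z) ∧ w ∈ VRs ∧ w ∉ Qs ∧ z ∈ VBs := by
      intro d hd
      rw [hreg3, Finset.mem_filter] at hd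
      obtain ⟨x, y, rfl⟩ := sym2_exists_rep d
      obtain ⟨q0, hq0d, hq0R, hq0Q⟩ := hd.2.1
      obtain ⟨z0, hz0d, hz0⟩ := hd.2.2
      have hq0B : q0 ∉ VBs := hVRnB q0 hq0R
      rw [Sym2.mem_iff] at hq0d hz0d
      rcases hq0d with h1 | h1 <;> rcases hz0d with h2 | h2
      · exact absurd (by rw [h1, ← h2]; exact hz0) hq0B
      · exact ⟨x, y, rfl, by rw [← h1]; exact hq0R, by rw [← h1]; exact hq0Q,
          by rw [← h2]; exact hz0⟩
      · exact ⟨y, x, Sym2.eq_swap.symm, by rw [← h1]; exact hq0R, by rw [← h1]; exact hq0Q,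
          by rw [← h2]; exact hz0⟩
      · exact absurd (by rw [h1, ← h2]; exact hz0) hq0B
    have hmem3' : ∀ w z : Fin (4 * n), w ∈ VRs → w ∉ Qs → z ∈ VBs → s(w, z) ∈ reg3 := by
      intro w z hw hwQ hz
      rw [hreg3, Finset.mem_filter, mem_allEdges, Sym2.mk_isDiag_iff]
      exact ⟨fun h => hVRnB w hw (h ▸ hz), ⟨w, Sym2.mem_mk_left _ _, hw, hwQ⟩,
        ⟨z, Sym2.mem_mk_right _ _, hz⟩⟩
    set f1 : Fin (4 * n) → Fin (4 * n) := fun v => if v ∈ VBs then ptr X v else v with hf1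
    set f2 : Fin (4 * n) → Fin (4 * n) := fun v => if v ∈ VBs then v else ptr X v with hf2
    set φ3 : Sym2 (Fin (4 * n)) → Sym2 (Fin (4 * n)) :=
      fun d => if c (Sym2.map f1 d) = false then Sym2.map f1 d else Sym2.map f2 d with hφ3
    have hm1 : ∀ w z : Fin (4 * n), w ∉ VBs → z ∈ VBs →
        Sym2.map f1 s(w, z) = s(w, ptr X z) := by
      intro w z hw hz
      rw [Sym2.map_pair_eq]
      simp only [hf1]
      rw [if_neg hw, if_pos hz]
    have hm2 : ∀ w z : Fin (4 * n), w ∉ VBs → z ∈ VBs →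
        Sym2.map f2 s(w, z) = s(ptr X w, z) := by
      intro w z hw hz
      rw [Sym2.map_pair_eq]
      simp only [hf2]
      rw [if_neg hw, if_pos hz]
    have key3 : ∀ e ∈ reg3.filter (fun e => c e = false),
        φ3 e ∈ reg3.filter (fun e => c e = false) ∧ φ3 (φ3 e) = e ∧ φ3 e ≠ e := by
      intro e he
      rw [Finset.mem_filter] at he
      obtain ⟨w, z, rfl, hwR, hwQ, hz⟩ := hmem3 _ he.1
      have hce : c s(w, z) = false := he.2
      have hwB : w ∉ VBs := hVRnB w hwR
      have hpwR : ptr X w ∈ VRs := hpVR w hwR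
      have hpwB : ptr X w ∉ VBs := hVRnB _ hpwR
      have hpwQ : ptr X w ∉ Qs := (hGshared w hwR hwQ).2.2
      have hpzB : ptr X z ∈ VBs := hpVB z hz
      have mixa := mixed w z hwR hwQ hz
      have mixb : c s(w, ptr X z) = ! c s(ptr X w, z) := by
        have h0 := mixed w (ptr X z) hwR hwQ hpzB
        rw [ptr_invol hX] at h0
        exact h0
      have ha2 : c s(ptr X w, ptr X z) = true := by
        rcases Bool.eq_false_or_eq_true (c s(ptr X w, ptr X z)) with h | h
        · exact h
        · rw [hce, h] at mixa
          exact absurd mixa (by simp)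
      have hm1e := hm1 w z hwB hz
      have hm2e := hm2 w z hwB hz
      have hm1pz : Sym2.map f1 s(w, ptr X z) = s(w, z) := by
        rw [hm1 w (ptr X z) hwB hpzB, ptr_invol hX]
      have hm1pw : Sym2.map f1 s(ptr X w, z) = s(ptr X w, ptr X z) := hm1 _ z hpwB hz
      have hm2pw : Sym2.map f2 s(ptr X w, z) = s(w, z) := by
        rw [hm2 _ z hpwB hz, ptr_invol hX]
      by_cases hc : c s(w, ptr X z) = false
      · have hstep : φ3 s(w, z) = s(w, ptr X z) := by
          simp only [hφ3]
          rw [hm1e, if_pos hc]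
        refine ⟨?_, ?_, ?_⟩
        · rw [hstep, Finset.mem_filter]
          exact ⟨hmem3' w (ptr X z) hwR hwQ hpzB, hc⟩
        · rw [hstep]
          simp only [hφ3]
          rw [hm1pz, if_pos hce]
        · rw [hstep]
          intro h
          rcases Sym2.eq_iff.1 h with ⟨h1, h2⟩ | ⟨h1, h2⟩
          · exact (ptr_ne hX z) h2
          · exact hVRnB w hwR (h1 ▸ hz)
      · have hcc : c s(ptr X w, z) = false := by
          rcases Bool.eq_false_or_eq_true (c s(ptr X w, z)) with h | h
          · rw [h] at mixb
            simp only [Bool.not_true] at mixb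
            exact absurd mixb hc
          · exact h
        have hstep : φ3 s(w, z) = s(ptr X w, z) := by
          simp only [hφ3]
          rw [hm1e, if_neg hc, hm2e]
        refine ⟨?_, ?_, ?_⟩
        · rw [hstep, Finset.mem_filter]
          exact ⟨hmem3' (ptr X w) z hpwR hpwQ hz, hcc⟩
        · rw [hstep]
          simp only [hφ3]
          rw [hm1pw, ha2]
          simp only [Bool.true_eq_false, if_false]
          exact hm2pw
        · rw [hstep]
          intro h
          rcases Sym2.eq_iff.1 h with ⟨h1, h2⟩ | ⟨h1, h2⟩
          · exact (ptr_ne hX w) h1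
          · exact hVRnB (ptr X w) hpwR (h1 ▸ hz)
    exact even_card_of_invol _ _ _ rfl (fun e he => (key3 e he).1)
      (fun e he => (key3 e he).2.1) (fun e he => (key3 e he).2.2)
  have hEv4 : Even (cnt c false reg4) := by
    unfold cnt
    have hmem4 : ∀ d ∈ reg4, ∃ w z, d = s(w, z) ∧ w ∈ Qs ∧ z ∈ VBs := by
      intro d hd
      rw [hreg4, Finset.mem_filter] at hd
      obtain ⟨x, y, rfl⟩ := sym2_exists_rep d
      obtain ⟨q0, hq0d, hq0⟩ := hd.2.1
      obtain ⟨z0, hz0d, hz0⟩ := hd.2.2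
      have hq0B : q0 ∉ VBs := hVRnB q0 (hQR q0 hq0)
      rw [Sym2.mem_iff] at hq0d hz0d
      rcases hq0d with h1 | h1 <;> rcases hz0d with h2 | h2
      · exact absurd (by rw [h1, ← h2]; exact hz0) hq0B
      · exact ⟨x, y, rfl, by rw [← h1]; exact hq0, by rw [← h2]; exact hz0⟩
      · exact ⟨y, x, Sym2.eq_swap.symm, by rw [← h1]; exact hq0, by rw [← h2]; exact hz0⟩
      · exact absurd (by rw [h1, ← h2]; exact hz0) hq0B
    have hmem4' : ∀ w z : Fin (4 * n), w ∈ Qs → z ∈ VBs → s(w, z) ∈ reg4 := by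
      intro w z hw hz
      rw [hreg4, Finset.mem_filter, mem_allEdges, Sym2.mk_isDiag_iff]
      exact ⟨fun h => hVRnB w (hQR w hw) (h ▸ hz), ⟨w, Sym2.mem_mk_left _ _, hw⟩,
        ⟨z, Sym2.mem_mk_right _ _, hz⟩⟩
    have key4 : ∀ e ∈ reg4.filter (fun e => c e = false),
        Sym2.map (ptr X') e ∈ reg4.filter (fun e => c e = false) ∧
        Sym2.map (ptr X') (Sym2.map (ptr X') e) = e ∧ Sym2.map (ptr X') e ≠ e := by
      intro e he
      rw [Finset.mem_filter] at he
      obtain ⟨w, z, rfl, hw, hz⟩ := hmem4 _ he.1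
      have hq := hQ'cases w hw
      have hp'z : ptr X' z = ptr X z := (hBshared z hz).2
      have hpzB : ptr X' z ∈ VBs := by rw [hp'z]; exact hpVB z hz
      have hcol : c s(ptr X' w, ptr X' z) = false := by
        rw [hp'z, ← monoQ w z hw hz]
        exact he.2
      refine ⟨?_, ?_, ?_⟩
      · rw [Finset.mem_filter, Sym2.map_pair_eq]
        exact ⟨hmem4' _ _ hq.1 hpzB, hcol⟩
      · rw [Sym2.map_pair_eq, Sym2.map_pair_eq, ptr_invol hX', ptr_invol hX']
      · rw [Sym2.map_pair_eq]
        intro h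
        rcases Sym2.eq_iff.1 h with ⟨h1, h2⟩ | ⟨h1, h2⟩
        · exact (ptr_ne hX' w) h1
        · exact hVRnB (ptr X' w) (hQR _ hq.1) (h1 ▸ hz)
    exact even_card_of_invol _ _ _ rfl (fun e he => (key4 e he).1)
      (fun e he => (key4 e he).2.1) (fun e he => (key4 e he).2.2)
  -- numerical wrap-up
  have hBlX : cnt c false X = n - 1 := by
    have h1 := Dint_even (c := c) hX
    have h2 := two_mul_card_of_isPM hX
    rw [hDX] at h1
    have h3 : X.card = 2 * n := by omega
    rw [h3] at h1
    have h4 : (cnt c false X : ℤ) = (n : ℤ) - 1 := by push_cast at h1 ⊢; omega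
    omega
  have hBlAll : 2 * cnt c false (allEdges (4 * n)) = 2 * n * (4 * n - 1) := by
    have h1 := cnt_add_cnt (c := c) (allEdges (4 * n))
    rw [hbal] at h1
    have h2 := card_allEdges (4 * n)
    rw [Nat.choose_two_right] at h2
    have h3 : (4 * n) * ((4 * n) - 1) = 2 * (2 * n * (4 * n - 1)) := by
      calc 4 * n * (4 * n - 1) = 2 * (2 * n) * (4 * n - 1) := by ring
        _ = 2 * (2 * n * (4 * n - 1)) := by ring
    have h5 : (allEdges (4 * n)).card = 2 * n * (4 * n - 1) := by
      rw [h2]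
      omega
    omega
  obtain ⟨k1, hk1⟩ := hEv1
  obtain ⟨k2, hk2⟩ := hEv2
  obtain ⟨k3, hk3⟩ := hEv3
  obtain ⟨k4, hk4⟩ := hEv4
  have ht1 : (4 * n - 1) + 1 = 4 * n := by omega
  have h5 : n * (4 * n - 1) + n = 4 * (n * n) := by
    calc n * (4 * n - 1) + n = n * ((4 * n - 1) + 1) := by ring
      _ = n * (4 * n) := by rw [ht1]
      _ = 4 * (n * n) := by ring
  have hfin : 2 * (n * (4 * n - 1)) = 2 * n * (4 * n - 1) := by ring
  generalize hnn : n * n = m at h5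
  generalize hmm : n * (4 * n - 1) = m2 at h5 hfin
  omega
end Main
end

section
/- Let K_{4n} be 2-edge-coloured with colours red and black, and let M be a perfect matching. If the number of red edges between V_B(M) and V_R(M) exceeds the number of black edges between them, then there exist edges uv, xy ∈ M with uv black and xy red, and an ordering of the endpoints, such that replacing {uv, xy} by {ux, vy} yields a perfect matching with one more red edge and one fewer black edge than M. -/
open Finset

lemma sym2_exists_eq {α} (e : Sym2 α) : ∃ a b, e = s(a,b) := by
  induction e using Sym2.ind with | _ a b => exact ⟨a,b,rfl⟩

lemma mk_ne_mk {α} {a b c d : α} (h1 : ¬(a = c ∧ b = d)) (h2 : ¬(a = d ∧ b = c)) :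
    s(a,b) ≠ s(c,d) := by
  intro h; rw [Sym2.eq_iff] at h; tauto

lemma mem_between' {N : ℕ} {S T : Finset (Fin N)} {e : Sym2 (Fin N)} :
    e ∈ between S T ↔ ¬ e.IsDiag ∧ ∃ a ∈ S, ∃ b ∈ T, e = s(a, b) := by
  simp [between, allEdges]

lemma pm_unique {N : ℕ} {M : Finset (Sym2 (Fin N))} (hM : IsPM M) {e e' : Sym2 (Fin N)}
    {v : Fin N} (he : e ∈ M) (hv : v ∈ e) (he' : e' ∈ M) (hv' : v ∈ e') : e = e' := by
  obtain ⟨E, _, hu⟩ := hM.2 v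
  rw [hu e ⟨he, hv⟩, hu e' ⟨he', hv'⟩]

lemma pm_distinct {N : ℕ} {M : Finset (Sym2 (Fin N))} (hM : IsPM M) {u v x y : Fin N}
    (h1 : s(u,v) ∈ M) (h2 : s(x,y) ∈ M) (hne : s(u,v) ≠ s(x,y)) :
    u ≠ v ∧ x ≠ y ∧ u ≠ x ∧ u ≠ y ∧ v ≠ x ∧ v ≠ y := by
  have huv : u ≠ v := by
    intro h; exact hM.1 _ h1 (by simp [Sym2.mk_isDiag_iff, h])
  have hxy : x ≠ y := by
    intro h; exact hM.1 _ h2 (by simp [Sym2.mk_isDiag_iff, h])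
  refine ⟨huv, hxy, ?_, ?_, ?_, ?_⟩ <;> intro h <;> subst h
  · exact hne (pm_unique (v := u) hM h1 (by simp) h2 (by simp))
  · exact hne (pm_unique (v := u) hM h1 (by simp) h2 (by simp))
  · exact hne (pm_unique (v := v) hM h1 (by simp) h2 (by simp))
  · exact hne (pm_unique (v := v) hM h1 (by simp) h2 (by simp))

lemma four_card_le {α} [DecidableEq α] (cc : α → Bool) (e1 e2 e3 e4 : α)
    (h12 : e1 ≠ e2) (h13 : e1 ≠ e3) (h14 : e1 ≠ e4) (h23 : e2 ≠ e3) (h24 : e2 ≠ e4)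
    (h34 : e3 ≠ e4)
    (hA : cc e1 = false ∨ cc e4 = false) (hB : cc e2 = false ∨ cc e3 = false) :
    (({e1,e2,e3,e4} : Finset α).filter (fun e => cc e = true)).card ≤
    (({e1,e2,e3,e4} : Finset α).filter (fun e => cc e = false)).card := by
  set F : Finset α := {e1,e2,e3,e4} with hF
  have hcard : F.card = 4 := by
    rw [hF]
    rw [card_insert_of_notMem (by simp [h12, h13, h14]),
        card_insert_of_notMem (by simp [h23, h24]),
        card_insert_of_notMem (by simp [h34]), card_singleton]
  have hsum : (F.filter (fun e => cc e = true)).card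
      + (F.filter (fun e => cc e = false)).card = 4 := by
    have := Finset.card_filter_add_card_filter_not (s := F) (fun e => cc e = true)
    simpa [hcard] using this
  have hblack : 2 ≤ (F.filter (fun e => cc e = false)).card := by
    obtain ⟨w1, hw1m, hw1⟩ : ∃ w, (w = e1 ∨ w = e4) ∧ cc w = false := by
      rcases hA with h | h
      exacts [⟨e1, Or.inl rfl, h⟩, ⟨e4, Or.inr rfl, h⟩]
    obtain ⟨w2, hw2m, hw2⟩ : ∃ w, (w = e2 ∨ w = e3) ∧ cc w = false := by
      rcases hB with h | h
      exacts [⟨e2, Or.inl rfl, h⟩, ⟨e3, Or.inr rfl, h⟩]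
    have hne : w1 ≠ w2 := by
      rcases hw1m with rfl | rfl <;> rcases hw2m with rfl | rfl <;>
        first | exact h12 | exact h13 | exact fun hh => h24 hh.symm
              | exact fun hh => h34 hh.symm
    have hm1 : w1 ∈ F := by rcases hw1m with rfl | rfl <;> simp [hF]
    have hm2 : w2 ∈ F := by rcases hw2m with rfl | rfl <;> simp [hF]
    have hsub : ({w1, w2} : Finset α) ⊆ F.filter (fun e => cc e = false) := by
      intro w hw
      simp only [mem_insert, mem_singleton] at hw
      rcases hw with rfl | rfl
      · exact mem_filter.mpr ⟨hm1, hw1⟩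
      · exact mem_filter.mpr ⟨hm2, hw2⟩
    calc 2 = ({w1, w2} : Finset α).card := by
          rw [card_insert_of_notMem (by simpa), card_singleton]
    _ ≤ _ := card_le_card hsub
  omega

lemma swap_pm {N : ℕ} {M : Finset (Sym2 (Fin N))} (hM : IsPM M) {u v x y : Fin N}
    (h1 : s(u,v) ∈ M) (h2 : s(x,y) ∈ M) (hne : s(u,v) ≠ s(x,y)) :
    IsPM (swap M u v x y) := by
  obtain ⟨duv, dxy, dux, duy, dvx, dvy⟩ := pm_distinct hM h1 h2 hne
  constructor
  · intro e he
    rcases mem_union.mp he with he | he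
    · exact hM.1 e (mem_sdiff.mp he).1
    · simp only [mem_insert, mem_singleton] at he
      rcases he with rfl | rfl
      · simpa [Sym2.mk_isDiag_iff] using dux
      · simpa [Sym2.mk_isDiag_iff] using dvy
  · intro w
    by_cases hwa : w = u ∨ w = x
    · refine ⟨s(u,x), ⟨mem_union_right _ (by simp), ?_⟩, ?_⟩
      · rcases hwa with rfl | rfl <;> simp
      · rintro e' ⟨he', hwe'⟩
        rcases mem_union.mp he' with he' | he'
        · exfalso
          rw [mem_sdiff] at he'
          rcases hwa with rfl | rfl
          · exact he'.2 (by simp [pm_unique hM he'.1 hwe' h1 (by simp : w ∈ s(w,v))])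
          · exact he'.2 (by simp [pm_unique hM he'.1 hwe' h2 (by simp : w ∈ s(w,y))])
        · simp only [mem_insert, mem_singleton] at he'
          rcases he' with rfl | rfl
          · rfl
          · exfalso
            rw [Sym2.mem_iff] at hwe'
            rcases hwa with rfl | rfl
            · rcases hwe' with h | h
              exacts [duv h, duy h]
            · rcases hwe' with h | h
              exacts [dvx h.symm, dxy h]
    · by_cases hwb : w = v ∨ w = y
      · refine ⟨s(v,y), ⟨mem_union_right _ (by simp), ?_⟩, ?_⟩
        · rcases hwb with rfl | rfl <;> simp
        · rintro e' ⟨he', hwe'⟩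
          rcases mem_union.mp he' with he' | he'
          · exfalso
            rw [mem_sdiff] at he'
            rcases hwb with rfl | rfl
            · exact he'.2 (by simp [pm_unique hM he'.1 hwe' h1 (by simp : w ∈ s(u,w))])
            · exact he'.2 (by simp [pm_unique hM he'.1 hwe' h2 (by simp : w ∈ s(x,w))])
          · simp only [mem_insert, mem_singleton] at he'
            rcases he' with rfl | rfl
            · exfalso
              rw [Sym2.mem_iff] at hwe'
              rcases hwb with rfl | rfl
              · rcases hwe' with h | h
                exacts [duv h.symm, dvx h]
              · rcases hwe' with h | h
                exacts [duy h.symm, dxy h.symm]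
            · rfl
      · push_neg at hwa hwb
        obtain ⟨e0, ⟨he0, hw0⟩, hu0⟩ := hM.2 w
        have hne0 : e0 ≠ s(u,v) ∧ e0 ≠ s(x,y) := by
          constructor <;> intro h <;> rw [h, Sym2.mem_iff] at hw0
          · rcases hw0 with h | h
            exacts [hwa.1 h, hwb.1 h]
          · rcases hw0 with h | h
            exacts [hwa.2 h, hwb.2 h]
        refine ⟨e0, ⟨mem_union_left _ (mem_sdiff.mpr ⟨he0, by simp [hne0.1, hne0.2]⟩), hw0⟩, ?_⟩
        rintro e' ⟨he', hwe'⟩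
        rcases mem_union.mp he' with he' | he'
        · exact hu0 e' ⟨(mem_sdiff.mp he').1, hwe'⟩
        · exfalso
          simp only [mem_insert, mem_singleton] at he'
          rcases he' with rfl | rfl <;> rw [Sym2.mem_iff] at hwe'
          · rcases hwe' with h | h
            exacts [hwa.1 h, hwa.2 h]
          · rcases hwe' with h | h
            exacts [hwb.1 h, hwb.2 h]

lemma swap_cnt {N : ℕ} (c : Sym2 (Fin N) → Bool) {M : Finset (Sym2 (Fin N))} (hM : IsPM M)
    {u v x y : Fin N} (h1 : s(u,v) ∈ M) (h2 : s(x,y) ∈ M)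
    (hb : c s(u,v) = false) (hr : c s(x,y) = true)
    (hux : c s(u,x) = true) (hvy : c s(v,y) = true) :
    cnt c true (swap M u v x y) = cnt c true M + 1 ∧
    cnt c false (swap M u v x y) = cnt c false M - 1 := by
  have hne : s(u,v) ≠ s(x,y) := by intro h; rw [h, hr] at hb; exact Bool.noConfusion hb
  obtain ⟨duv, dxy, dux, duy, dvx, dvy⟩ := pm_distinct hM h1 h2 hne
  have hux_nm : s(u,x) ∉ M := by
    intro hm
    have := pm_unique (v := u) hM hm (by simp) h1 (by simp)
    rw [Sym2.eq_iff] at this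
    rcases this with ⟨_, h⟩ | ⟨h, _⟩
    exacts [dvx h.symm, duv h]
  have hvy_nm : s(v,y) ∉ M := by
    intro hm
    have := pm_unique (v := v) hM hm (by simp) h1 (by simp)
    rw [Sym2.eq_iff] at this
    rcases this with ⟨h, _⟩ | ⟨_, h⟩
    exacts [duv h.symm, duy (h.symm)]
  have huxvy : s(u,x) ≠ s(v,y) := by
    intro hh
    rw [Sym2.eq_iff] at hh
    rcases hh with ⟨h, _⟩ | ⟨h, _⟩
    exacts [duv h, duy h]
  constructor
  · have e1 : (swap M u v x y).filter (fun e => c e = true) =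
        ((M.filter (fun e => c e = true)).erase s(x,y)) ∪ {s(u,x), s(v,y)} := by
      ext e
      simp only [swap, mem_filter, mem_union, mem_sdiff, mem_insert, mem_singleton, mem_erase,
        not_or]
      constructor
      · rintro ⟨⟨hm, hn1, hn2⟩ | rfl | rfl, hc⟩
        · exact Or.inl ⟨hn2, hm, hc⟩
        · exact Or.inr (Or.inl rfl)
        · exact Or.inr (Or.inr rfl)
      · rintro (⟨hn2, hm, hc⟩ | rfl | rfl)
        · refine ⟨Or.inl ⟨hm, ?_, hn2⟩, hc⟩
          intro he; rw [he, hb] at hc; exact Bool.noConfusion hc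
        · exact ⟨Or.inr (Or.inl rfl), hux⟩
        · exact ⟨Or.inr (Or.inr rfl), hvy⟩
    have hxymem : s(x,y) ∈ M.filter (fun e => c e = true) := mem_filter.mpr ⟨h2, hr⟩
    have hdisj : Disjoint ((M.filter (fun e => c e = true)).erase s(x,y))
        ({s(u,x), s(v,y)} : Finset (Sym2 (Fin N))) := by
      rw [disjoint_right]
      intro e he hee
      simp only [mem_insert, mem_singleton] at he
      have := (mem_filter.mp (mem_of_mem_erase hee)).1
      rcases he with rfl | rfl
      exacts [hux_nm this, hvy_nm this]
    have hpos : 0 < cnt c true M := card_pos.mpr ⟨_, hxymem⟩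
    rw [cnt, e1, card_union_of_disjoint hdisj, card_erase_of_mem hxymem]
    rw [card_insert_of_notMem (by simpa using huxvy), card_singleton]
    unfold cnt at hpos ⊢
    omega
  · have e2 : (swap M u v x y).filter (fun e => c e = false) =
        (M.filter (fun e => c e = false)).erase s(u,v) := by
      ext e
      simp only [swap, mem_filter, mem_union, mem_sdiff, mem_insert, mem_singleton, mem_erase,
        not_or]
      constructor
      · rintro ⟨⟨hm, hn1, hn2⟩ | rfl | rfl, hc⟩
        · exact ⟨hn1, hm, hc⟩
        · rw [hux] at hc; exact Bool.noConfusion hc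
        · rw [hvy] at hc; exact Bool.noConfusion hc
      · rintro ⟨hn1, hm, hc⟩
        refine ⟨Or.inl ⟨hm, hn1, ?_⟩, hc⟩
        intro he; rw [he, hr] at hc; exact Bool.noConfusion hc
    have huvmem : s(u,v) ∈ M.filter (fun e => c e = false) := mem_filter.mpr ⟨h1, hb⟩
    rw [cnt, e2, card_erase_of_mem huvmem]
    rfl

set_option maxHeartbeats 2000000 in
/-- if more red than black edges lie between `V_B(M)` and `V_R(M)`,
a swapping increases the red count by one and decreases the black count by one. -/
theorem stmt2 (n : ℕ) (c : Sym2 (Fin (4 * n)) → Bool) (M : Finset (Sym2 (Fin (4 * n))))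
    (hM : IsPM M)
    (h : cnt c false (between (VB c M) (VR c M)) < cnt c true (between (VB c M) (VR c M))) :
    ∃ u v x y : Fin (4 * n), s(u, v) ∈ M ∧ s(x, y) ∈ M ∧
      c s(u, v) = false ∧ c s(x, y) = true ∧
      IsPM (swap M u v x y) ∧
      cnt c true (swap M u v x y) = cnt c true M + 1 ∧
      cnt c false (swap M u v x y) = cnt c false M - 1 := by
  have key : ∃ u v x y : Fin (4 * n), s(u,v) ∈ M ∧ s(x,y) ∈ M ∧
      c s(u,v) = false ∧ c s(x,y) = true ∧ c s(u,x) = true ∧ c s(v,y) = true := by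
    by_contra hcon
    push_neg at hcon
    -- the function picking the matching edge of each vertex
    choose f hf using hM.2
    have hfu : ∀ (w : Fin (4 * n)) e, e ∈ M → w ∈ e → e = f w :=
      fun w e he hw => (hf w).2 e ⟨he, hw⟩
    have hVB : ∀ a, a ∈ VB c M → c (f a) = false := by
      intro a ha
      simp only [VB, mem_filter, mem_univ, true_and] at ha
      obtain ⟨e, he, hae, hce⟩ := ha
      rw [← hfu a e he hae]; exact hce
    have hVR : ∀ a, a ∈ VR c M → c (f a) = true := by
      intro a ha
      simp only [VR, mem_filter, mem_univ, true_and] at ha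
      obtain ⟨e, he, hae, hce⟩ := ha
      rw [← hfu a e he hae]; exact hce
    have hVB' : ∀ a, c (f a) = false → a ∈ VB c M := by
      intro a ha
      simp only [VB, mem_filter, mem_univ, true_and]
      exact ⟨f a, (hf a).1.1, (hf a).1.2, ha⟩
    have hVR' : ∀ a, c (f a) = true → a ∈ VR c M := by
      intro a ha
      simp only [VR, mem_filter, mem_univ, true_and]
      exact ⟨f a, (hf a).1.1, (hf a).1.2, ha⟩
    set Bt := between (VB c M) (VR c M) with hBt
    set T := Bt.image (Sym2.map f) with hT
    have hred : (Bt.filter (fun e => c e = true)).card =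
        ∑ p ∈ T, ((Bt.filter (fun e => c e = true)).filter
          (fun e => Sym2.map f e = p)).card :=
      Finset.card_eq_sum_card_fiberwise
        (fun e he => mem_image_of_mem _ (mem_filter.mp he).1)
    have hblk : (Bt.filter (fun e => c e = false)).card =
        ∑ p ∈ T, ((Bt.filter (fun e => c e = false)).filter
          (fun e => Sym2.map f e = p)).card :=
      Finset.card_eq_sum_card_fiberwise
        (fun e he => mem_image_of_mem _ (mem_filter.mp he).1)
    have hle : cnt c true Bt ≤ cnt c false Bt := by
      rw [cnt, cnt, hred, hblk]
      apply Finset.sum_le_sum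
      intro p hp
      obtain ⟨e0, he0, rfl⟩ := mem_image.mp hp
      rw [hBt, mem_between'] at he0
      obtain ⟨hnd, a, ha, b, hb, rfl⟩ := he0
      have hcB : c (f a) = false := hVB a ha
      have hcR : c (f b) = true := hVR b hb
      obtain ⟨u, v, hEB⟩ := sym2_exists_eq (f a)
      obtain ⟨x, y, hER⟩ := sym2_exists_eq (f b)
      have huvM : s(u,v) ∈ M := hEB ▸ (hf a).1.1
      have hxyM : s(x,y) ∈ M := hER ▸ (hf b).1.1
      have hcB' : c s(u,v) = false := hEB ▸ hcB
      have hcR' : c s(x,y) = true := hER ▸ hcR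
      have hneBR : s(u,v) ≠ s(x,y) := by
        intro hh; rw [hh, hcR'] at hcB'; exact Bool.noConfusion hcB'
      obtain ⟨duv, dxy, dux, duy, dvx, dvy⟩ := pm_distinct hM huvM hxyM hneBR
      have hfua : f u = f a := (hfu u (f a) (hf a).1.1 (by rw [hEB]; simp)).symm
      have hfva : f v = f a := (hfu v (f a) (hf a).1.1 (by rw [hEB]; simp)).symm
      have hfxb : f x = f b := (hfu x (f b) (hf b).1.1 (by rw [hER]; simp)).symm
      have hfyb : f y = f b := (hfu y (f b) (hf b).1.1 (by rw [hER]; simp)).symm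
      -- the fiber over `p = s(f a, f b)` is exactly the four cross edges
      have hfib : ∀ q : Sym2 (Fin (4 * n)),
          (q ∈ Bt ∧ Sym2.map f q = Sym2.map f s(a,b)) ↔
          q ∈ ({s(u,x), s(u,y), s(v,x), s(v,y)} : Finset (Sym2 (Fin (4 * n)))) := by
        intro q
        rw [Sym2.map_pair_eq]
        constructor
        · rintro ⟨hq, hmap⟩
          rw [hBt, mem_between'] at hq
          obtain ⟨hnd', a', ha', b', hb', rfl⟩ := hq
          rw [Sym2.map_pair_eq, Sym2.eq_iff] at hmap
          have hcols : f a' = f a ∧ f b' = f b := by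
            rcases hmap with hh | hh
            · exact hh
            · exfalso
              have := hVB a' ha'
              rw [hh.1, hcR] at this
              exact Bool.noConfusion this
          have ha'm : a' ∈ s(u,v) := by rw [← hEB, ← hcols.1]; exact (hf a').1.2
          have hb'm : b' ∈ s(x,y) := by rw [← hER, ← hcols.2]; exact (hf b').1.2
          rw [Sym2.mem_iff] at ha'm hb'm
          simp only [mem_insert, mem_singleton]
          rcases ha'm with rfl | rfl <;> rcases hb'm with rfl | rfl <;> tauto
        · intro hq
          have hmemB : ∀ w : Fin (4 * n), f w = f a → w ∈ VB c M :=
            fun w hw => hVB' w (by rw [hw]; exact hcB)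
          have hmemR : ∀ w : Fin (4 * n), f w = f b → w ∈ VR c M :=
            fun w hw => hVR' w (by rw [hw]; exact hcR)
          simp only [mem_insert, mem_singleton] at hq
          rcases hq with rfl | rfl | rfl | rfl
          · refine ⟨mem_between'.mpr ⟨by simp [Sym2.mk_isDiag_iff, dux],
              u, hmemB u hfua, x, hmemR x hfxb, rfl⟩, ?_⟩
            rw [Sym2.map_pair_eq, hfua, hfxb]
          · refine ⟨mem_between'.mpr ⟨by simp [Sym2.mk_isDiag_iff, duy],
              u, hmemB u hfua, y, hmemR y hfyb, rfl⟩, ?_⟩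
            rw [Sym2.map_pair_eq, hfua, hfyb]
          · refine ⟨mem_between'.mpr ⟨by simp [Sym2.mk_isDiag_iff, dvx],
              v, hmemB v hfva, x, hmemR x hfxb, rfl⟩, ?_⟩
            rw [Sym2.map_pair_eq, hfva, hfxb]
          · refine ⟨mem_between'.mpr ⟨by simp [Sym2.mk_isDiag_iff, dvy],
              v, hmemB v hfva, y, hmemR y hfyb, rfl⟩, ?_⟩
            rw [Sym2.map_pair_eq, hfva, hfyb]
      have hfilter_eq : ∀ bb : Bool,
          (Bt.filter (fun e => c e = bb)).filter (fun e => Sym2.map f e = Sym2.map f s(a,b)) =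
          ({s(u,x), s(u,y), s(v,x), s(v,y)} : Finset (Sym2 (Fin (4 * n)))).filter
            (fun e => c e = bb) := by
        intro bb
        ext q
        simp only [mem_filter]
        constructor
        · rintro ⟨⟨hq, hc⟩, hmap⟩
          exact ⟨(hfib q).1 ⟨hq, hmap⟩, hc⟩
        · rintro ⟨hq, hc⟩
          have := (hfib q).2 hq
          exact ⟨⟨this.1, hc⟩, this.2⟩
      rw [hfilter_eq true, hfilter_eq false]
      -- the non-existence assumption gives the two "at least one black" conditions
      have hA : c s(u,x) = false ∨ c s(v,y) = false := by
        rcases Bool.eq_false_or_eq_true (c s(u,x)) with hh | hh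
        · have := hcon u v x y huvM hxyM hcB' hcR' hh
          exact Or.inr (by simpa using this)
        · exact Or.inl hh
      have hB : c s(u,y) = false ∨ c s(v,x) = false := by
        have hyxM : s(y,x) ∈ M := by rw [Sym2.eq_swap]; exact hxyM
        have hcyx : c s(y,x) = true := by rw [Sym2.eq_swap]; exact hcR'
        rcases Bool.eq_false_or_eq_true (c s(u,y)) with hh | hh
        · have := hcon u v y x huvM hyxM hcB' hcyx hh
          exact Or.inr (by simpa using this)
        · exact Or.inl hh
      exact four_card_le c s(u,x) s(u,y) s(v,x) s(v,y)
        (mk_ne_mk (fun hh => dxy hh.2) (fun hh => duy hh.1))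
        (mk_ne_mk (fun hh => duv hh.1) (fun hh => dux hh.1))
        (mk_ne_mk (fun hh => duv hh.1) (fun hh => duy hh.1))
        (mk_ne_mk (fun hh => duv hh.1) (fun hh => dux hh.1))
        (mk_ne_mk (fun hh => duv hh.1) (fun hh => duy hh.1))
        (mk_ne_mk (fun hh => dxy hh.2) (fun hh => dvy hh.1))
        hA hB
    omega
  obtain ⟨u, v, x, y, huvM, hxyM, hb, hr, hux, hvy⟩ := key
  have hne : s(u,v) ≠ s(x,y) := by
    intro hh; rw [hh, hr] at hb; exact Bool.noConfusion hb
  obtain ⟨hc1, hc2⟩ := swap_cnt c hM huvM hxyM hb hr hux hvy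
  exact ⟨u, v, x, y, huvM, hxyM, hb, hr, swap_pm hM huvM hxyM hne, hc1, hc2⟩
end

section
/- Let M be a perfect matching of a 2-edge-coloured K_{4n} with exactly n+1 black and n-1 red edges. Suppose that for all u,v,x,y ∈ V_B(M) with uv, xy ∈ M, if ux is red then vy is red. Then the number of red edges in the induced subgraph G[V_B(M)] is even. -/
open Finset

/-- if `M` has `n+1` black and `n-1` red edges and red cross pairs in
`V_B(M)` always come in pairs, then the number of red edges inside `V_B(M)` is even. -/
theorem stmt6 (n : ℕ) (c : Sym2 (Fin (4 * n)) → Bool) (M : Finset (Sym2 (Fin (4 * n))))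
    (hM : IsPM M)
    (hb : cnt c false M = n + 1) (hr : cnt c true M = n - 1)
    (hpair : ∀ u v x y : Fin (4 * n), s(u, v) ∈ M → s(x, y) ∈ M →
      u ∈ VB c M → v ∈ VB c M → x ∈ VB c M → y ∈ VB c M →
      s(u, v) ≠ s(x, y) → c s(u, x) = true → c s(v, y) = true) :
    Even (cnt c true (inside (VB c M))) := by
  classical
  have hexu : ∀ v : Fin (4 * n), ∃ e, e ∈ M ∧ v ∈ e := fun v => (hM.2 v).exists
  choose E hEM hEmem using hexu
  have hEuniq : ∀ v e, e ∈ M → v ∈ e → e = E v := fun v e he hv =>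
    (hM.2 v).unique ⟨he, hv⟩ ⟨hEM v, hEmem v⟩
  set m : Fin (4 * n) → Fin (4 * n) := fun v => Sym2.Mem.other' (hEmem v) with hm
  have hspec : ∀ v, s(v, m v) = E v := fun v => Sym2.other_spec' (hEmem v)
  have hmem : ∀ v, s(v, m v) ∈ M := fun v => (hspec v) ▸ hEM v
  have hne : ∀ v, m v ≠ v := by
    intro v h
    have hd := hM.1 (E v) (hEM v)
    rw [← hspec v, h] at hd
    exact hd (Sym2.mk_isDiag_iff.mpr rfl)
  have hmv : ∀ u v, s(u, v) ∈ M → u ≠ v → m u = v := by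
    intro u v h hne'
    have h1 : s(u, v) = E u := hEuniq u _ h (by simp)
    have h2 := hspec u
    rw [← h1] at h2
    rcases Sym2.eq_iff.mp h2 with ⟨_, h3⟩ | ⟨h3, h4⟩
    · exact h3
    · exact absurd h3 hne'
  have hinv : ∀ v, m (m v) = v := by
    intro v
    have hmem' : s(m v, v) ∈ M := by rw [Sym2.eq_swap]; exact hmem v
    exact hmv (m v) v hmem' (hne v)
  have hVB : ∀ v, v ∈ VB c M ↔ c (E v) = false := by
    intro v
    simp only [VB, mem_filter, mem_univ, true_and]
    constructor
    · rintro ⟨e, heM, hve, hce⟩; rwa [hEuniq v e heM hve] at hce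
    · intro h; exact ⟨E v, hEM v, hEmem v, h⟩
  have hVBm : ∀ v, v ∈ VB c M → m v ∈ VB c M := by
    intro v hv
    rw [hVB] at hv ⊢
    have hE : E (m v) = E v :=
      (hEuniq (m v) (E v) (hEM v) (by rw [← hspec v]; simp)).symm
    rw [hE]; exact hv
  set S := (inside (VB c M)).filter (fun e => c e = true) with hS
  have key : ∀ e ∈ S, Sym2.map m e ∈ S ∧ Sym2.map m e ≠ e := by
    intro e he
    induction e using Sym2.inductionOn with
    | hf u x =>
      simp only [hS, mem_filter, inside, allEdges, mem_univ, true_and] at he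
      obtain ⟨⟨hnd, hin⟩, hred⟩ := he
      have hux : u ≠ x := by simpa using hnd
      have huB : u ∈ VB c M := hin u (by simp)
      have hxB : x ∈ VB c M := hin x (by simp)
      have hnotM : s(u, x) ∉ M := by
        intro h
        have hb' := (hVB u).mp huB
        rw [← hEuniq u _ h (by simp)] at hb'
        rw [hred] at hb'
        simp at hb'
      have hmux : m u ≠ x := by
        intro h; apply hnotM; rw [← h]; exact hmem u
      have hEne : s(u, m u) ≠ s(x, m x) := by
        intro h
        rcases Sym2.eq_iff.mp h with ⟨h1, _⟩ | ⟨h1, h2⟩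
        · exact hux h1
        · exact hmux h2
      have hred2 : c s(m u, m x) = true :=
        hpair u (m u) x (m x) (hmem u) (hmem x) huB (hVBm u huB) hxB (hVBm x hxB) hEne hred
      have hmne : m u ≠ m x := fun h => hux (by rw [← hinv u, h, hinv x])
      constructor
      · simp only [hS, mem_filter, inside, allEdges, mem_univ, true_and, Sym2.map_pair_eq]
        refine ⟨⟨by simpa using hmne, ?_⟩, hred2⟩
        intro v hv
        rcases Sym2.mem_iff.mp hv with rfl | rfl
        · exact hVBm u huB
        · exact hVBm x hxB
      · rw [Sym2.map_pair_eq]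
        intro h
        rcases Sym2.eq_iff.mp h with ⟨h1, _⟩ | ⟨h1, _⟩
        · exact hne u h1
        · exact hmux h1
  have hinvS : ∀ e, Sym2.map m (Sym2.map m e) = e := by
    intro e
    induction e using Sym2.inductionOn with
    | hf u x => simp [Sym2.map_pair_eq, hinv]
  have hsum : ∑ _e ∈ S, (1 : ZMod 2) = 0 :=
    Finset.sum_involution (fun e _ => Sym2.map m e)
      (fun e he => by decide)
      (fun e he _ => (key e he).2)
      (fun e he => (key e he).1)
      (fun e he => hinvS e)
  have hcard : ((S.card : ZMod 2)) = 0 := by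
    rw [← hsum]; simp
  have : (2 : ℕ) ∣ S.card := by
    rwa [ZMod.natCast_eq_zero_iff] at hcard
  exact even_iff_two_dvd.mpr this
end
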